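/- arXiv:math/0702173 — 6 statements merged into one kernel-verified Lean document; each statement's English description precedes it below -/
import Mathlib

section
/- Under Assumption (A1.3) on φ with inverse ψ, and F : [0,∞) → [0,∞) convex increasing with continuous derivative F' bounded by K, define H'(b) = (1/ν̄(ψ(b))) ∫_{ψ(b)}^∞ F'(m) ν(dm) where ν̄(l) = exp(−∫₀^l dm/φ(m)) and ν(dm) = (ν̄(m)/φ(m)) dm. Then H' is well defined, bounded by K, and nondecreasing; hence H(b) = F(0) + ∫₀^b H'(s) ds is convex. -/
open MeasureTheory Set Filter Topology

/-- The function `H'` defined from `F` and `φ` in Section 2.1 is well defined,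
bounded by `K`, nondecreasing; hence `H(b) = F(0) + ∫₀^b H'` is convex. -/
theorem Hprime_well_defined_bounded_monotone (φ ψ F F' Hd : ℝ → ℝ) (K : ℝ)
    (hcont : ContinuousOn φ (Ici 0))
    (hmono : StrictMonoOn φ (Ici 0))
    (hφ0 : φ 0 = 0)
    (hint0 : ∃ ε > 0, IntervalIntegrable (fun l => 1 / φ l) volume 0 ε)
    (hinf : Tendsto (fun x => ∫ l in (0:ℝ)..x, 1 / φ l) atTop atTop)
    (hψ : ∀ x ≥ (0:ℝ), ψ (φ x) = x ∧ φ (ψ x) = x ∧ 0 ≤ ψ x)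
    (hF : ConvexOn ℝ (Ici 0) F)
    (hFmono : MonotoneOn F (Ici 0))
    (hF' : ∀ x ≥ (0:ℝ), HasDerivAt F (F' x) x)
    (hF'cont : ContinuousOn F' (Ici 0))
    (hFK : ∀ x ≥ (0:ℝ), F' x ≤ K)
    (hHd : ∀ b, Hd b = (1 / Real.exp (-∫ u in (0:ℝ)..(ψ b), 1 / φ u)) *
      ∫ m in Ioi (ψ b), F' m * (Real.exp (-∫ u in (0:ℝ)..m, 1 / φ u) / φ m)) :
    (∀ b ≥ (0:ℝ), IntegrableOn
      (fun m => F' m * (Real.exp (-∫ u in (0:ℝ)..m, 1 / φ u) / φ m)) (Ioi (ψ b))) ∧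
    (∀ b ≥ (0:ℝ), 0 ≤ Hd b ∧ Hd b ≤ K) ∧
    MonotoneOn Hd (Ici 0) ∧
    ConvexOn ℝ (Ici 0) (fun b => F 0 + ∫ s in (0:ℝ)..b, Hd s) := by
  -- Positivity of φ
  have hφpos : ∀ x : ℝ, 0 < x → 0 < φ x := fun x hx => by
    have := hmono self_mem_Ici (mem_Ici.2 hx.le) hx
    rwa [hφ0] at this
  have hinvcont : ContinuousOn (fun l => 1 / φ l) (Ioi 0) :=
    ContinuousOn.div continuousOn_const
      (hcont.mono (fun x hx => mem_Ici.2 (le_of_lt (mem_Ioi.1 hx)))) (fun y hy => (hφpos y hy).ne')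
  -- Integrability of 1/φ on [0, x]
  have hGint : ∀ x : ℝ, 0 ≤ x → IntervalIntegrable (fun l => 1 / φ l) volume 0 x := by
    obtain ⟨ε, hε, hεint⟩ := hint0
    intro x hx
    rcases le_total x ε with h | h
    · exact hεint.mono_set (by
        rw [uIcc_of_le hx, uIcc_of_le hε.le]
        exact Icc_subset_Icc le_rfl h)
    · refine hεint.trans (b := ε) ?_
      apply ContinuousOn.intervalIntegrable
      apply hinvcont.mono
      rw [uIcc_of_le h]
      exact fun y hy => lt_of_lt_of_le hε hy.1
  set G : ℝ → ℝ := fun x => ∫ u in (0:ℝ)..x, 1 / φ u with hGdef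
  have hGm : ∀ m : ℝ, (∫ u in (0:ℝ)..m, 1 / φ u) = G m := fun _ => rfl
  have hGderiv : ∀ x : ℝ, 0 < x → HasDerivAt G (1 / φ x) x := by
    intro x hx
    exact intervalIntegral.integral_hasDerivAt_right (hGint x hx.le)
      (hinvcont.stronglyMeasurableAtFilter isOpen_Ioi x hx)
      (hinvcont.continuousAt (Ioi_mem_nhds hx))
  have hGcont0 : ContinuousWithinAt G (Ici 0) 0 := by
    obtain ⟨ε, hε, hεint⟩ := hint0
    have h1 : ContinuousOn G (uIcc 0 ε) :=
      intervalIntegral.continuousOn_primitive_interval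
        (by rw [← intervalIntegrable_iff']; exact hεint)
    rw [uIcc_of_le hε.le] at h1
    have h2 : ContinuousWithinAt G (Icc 0 ε) 0 := h1.continuousWithinAt ⟨le_rfl, hε.le⟩
    apply h2.mono_of_mem_nhdsWithin
    rw [show Icc (0:ℝ) ε = Ici 0 ∩ Iic ε from (Ici_inter_Iic).symm]
    exact inter_mem_nhdsWithin _ (Iic_mem_nhds hε)
  set N : ℝ → ℝ := fun x => Real.exp (-G x) with hNdef
  have hNm : ∀ m : ℝ, Real.exp (-G m) = N m := fun _ => rfl
  have hNpos : ∀ x : ℝ, 0 < N x := fun x => Real.exp_pos _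
  have hNtop : Tendsto N atTop (𝓝 0) := by
    apply Real.tendsto_exp_atBot.comp
    exact tendsto_neg_atTop_atBot.comp hinf
  set g : ℝ → ℝ := fun m => N m / φ m with hgdef
  have hgm : ∀ m : ℝ, N m / φ m = g m := fun _ => rfl
  have hgnn : ∀ m : ℝ, 0 < m → 0 ≤ g m := fun m hm =>
    div_nonneg (hNpos m).le (hφpos m hm).le
  have hNcont : ∀ l : ℝ, 0 ≤ l → ContinuousWithinAt (fun x => -N x) (Ici l) l := by
    intro l hl
    rcases hl.eq_or_lt with h | h
    · exact (((Real.continuous_exp.comp continuous_neg).continuousAt.comp_continuousWithinAt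
        (h ▸ hGcont0)).neg)
    · exact ((((hGderiv l h).continuousAt.neg).rexp).neg).continuousWithinAt
  have hNderiv : ∀ l : ℝ, 0 ≤ l → ∀ x ∈ Ioi l, HasDerivAt (fun x => -N x) (g x) x := by
    intro l hl x hx
    have hx0 : 0 < x := lt_of_le_of_lt hl hx
    have h1 : HasDerivAt (fun x => -G x) (-(1 / φ x)) x := (hGderiv x hx0).neg
    have h2 : HasDerivAt (fun x => Real.exp (-G x)) (Real.exp (-G x) * -(1 / φ x)) x := h1.exp
    have h3 := h2.neg
    convert h3 using 1
    · rfl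
    · rfl
    · rfl
    rw [hNm x, ← hgm x]
    field_simp
  have htail : ∀ l : ℝ, 0 ≤ l → IntegrableOn g (Ioi l) ∧ ∫ m in Ioi l, g m = N l := by
    intro l hl
    have hlim : Tendsto (fun x => -N x) atTop (𝓝 0) := by simpa using hNtop.neg
    have hpos : ∀ x ∈ Ioi l, 0 ≤ g x := fun x hx => hgnn x (lt_of_le_of_lt hl hx)
    refine ⟨integrableOn_Ioi_deriv_of_nonneg (hNcont l hl) (hNderiv l hl) hpos hlim, ?_⟩
    have := integral_Ioi_of_hasDerivAt_of_nonneg (hNcont l hl) (hNderiv l hl) hpos hlim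
    simpa using this
  -- slope facts for F
  have hslope : ∀ x : ℝ, 0 ≤ x →
      Tendsto (fun z => (F z - F x) / (z - x)) (𝓝[≠] x) (𝓝 (F' x)) :=
    fun x hx => (hasDerivAt_iff_tendsto_slope.1 (hF' x hx)).congr
      fun z => slope_def_field F x z
  have hslope_nn : ∀ x y : ℝ, 0 ≤ x → x < y → 0 ≤ (F y - F x) / (y - x) := by
    intro x y hx hxy
    exact div_nonneg (sub_nonneg.2 (hFmono (mem_Ici.2 hx) (mem_Ici.2 (hx.trans hxy.le)) hxy.le))
      (sub_nonneg.2 hxy.le)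
  have hF'nn : ∀ x : ℝ, 0 ≤ x → 0 ≤ F' x := by
    intro x hx
    have ht : Tendsto (fun z => (F z - F x) / (z - x)) (𝓝[>] x) (𝓝 (F' x)) :=
      (hslope x hx).mono_left (nhdsWithin_mono x fun z hz => ne_of_gt hz)
    exact ge_of_tendsto ht (eventually_nhdsWithin_of_forall fun z hz => hslope_nn x z hx hz)
  have hF'_le_slope : ∀ x y : ℝ, 0 ≤ x → x < y → F' x ≤ (F y - F x) / (y - x) := by
    intro x y hx hxy
    have hy : (0:ℝ) ≤ y := hx.trans hxy.le
    have ht : Tendsto (fun z => (F z - F x) / (z - x)) (𝓝[>] x) (𝓝 (F' x)) :=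
      (hslope x hx).mono_left (nhdsWithin_mono x fun z hz => ne_of_gt hz)
    refine le_of_tendsto ht ?_
    filter_upwards [Ioo_mem_nhdsGT_of_mem ⟨le_rfl, hxy⟩] with z hz
    exact hF.secant_mono (mem_Ici.2 hx) (mem_Ici.2 (hx.trans hz.1.le)) (mem_Ici.2 hy)
      (ne_of_gt hz.1) (ne_of_gt hxy) hz.2.le
  have hslope_le_F' : ∀ x y : ℝ, 0 ≤ x → x < y → (F y - F x) / (y - x) ≤ F' y := by
    intro x y hx hxy
    have hy : (0:ℝ) ≤ y := hx.trans hxy.le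
    have ht : Tendsto (fun z => (F z - F y) / (z - y)) (𝓝[<] y) (𝓝 (F' y)) :=
      (hslope y hy).mono_left (nhdsWithin_mono y fun z hz => ne_of_lt hz)
    refine ge_of_tendsto ht ?_
    filter_upwards [Ioo_mem_nhdsLT_of_mem ⟨hxy, le_rfl⟩] with z hz
    have h := hF.secant_mono (mem_Ici.2 hy) (mem_Ici.2 hx) (mem_Ici.2 (hx.trans hz.1.le))
      (ne_of_lt hxy) (ne_of_lt hz.2) hz.1.le
    calc (F y - F x) / (y - x) = (F x - F y) / (x - y) := by
          rw [← neg_div_neg_eq]; ring_nf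
      _ ≤ (F z - F y) / (z - y) := h
  have hF'mono : ∀ x y : ℝ, 0 ≤ x → x ≤ y → F' x ≤ F' y := by
    intro x y hx hxy
    rcases hxy.eq_or_lt with rfl | h
    · exact le_rfl
    · exact (hF'_le_slope x y hx h).trans (hslope_le_F' x y hx h)
  have hKnn : (0:ℝ) ≤ K := (hF'nn 0 le_rfl).trans (hFK 0 le_rfl)
  -- continuity of g on (0, ∞)
  have hGcontOn : ContinuousOn G (Ioi 0) := fun x hx =>
    (hGderiv x hx).continuousAt.continuousWithinAt
  have hgcont : ContinuousOn g (Ioi 0) := by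
    apply ContinuousOn.div
    · exact Real.continuous_exp.comp_continuousOn hGcontOn.neg
    · exact hcont.mono (fun x hx => mem_Ici.2 (le_of_lt (mem_Ioi.1 hx)))
    · exact fun y hy => (hφpos y hy).ne'
  -- integrability of F' * g
  have hFgint : ∀ l : ℝ, 0 ≤ l → IntegrableOn (fun m => F' m * g m) (Ioi l) := by
    intro l hl
    have hmeas : AEStronglyMeasurable (fun m => F' m * g m) (volume.restrict (Ioi l)) := by
      apply ContinuousOn.aestronglyMeasurable _ measurableSet_Ioi
      apply ContinuousOn.mono _ (Ioi_subset_Ioi hl)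
      exact (hF'cont.mono (fun x hx => mem_Ici.2 (le_of_lt (mem_Ioi.1 hx)))).mul hgcont
    refine Integrable.mono' (((htail l hl).1).const_mul K) hmeas ?_
    rw [ae_restrict_iff' measurableSet_Ioi]
    refine ae_of_all _ fun m hm => ?_
    have hm0 : 0 < m := lt_of_le_of_lt hl hm
    rw [Real.norm_eq_abs, abs_of_nonneg (mul_nonneg (hF'nn m hm0.le) (hgnn m hm0))]
    exact mul_le_mul_of_nonneg_right (hFK m hm0.le) (hgnn m hm0)
  have hAnn : ∀ l : ℝ, 0 ≤ l → 0 ≤ ∫ m in Ioi l, F' m * g m := fun l hl =>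
    setIntegral_nonneg measurableSet_Ioi fun m hm =>
      mul_nonneg (hF'nn m (hl.trans (le_of_lt hm))) (hgnn m (lt_of_le_of_lt hl hm))
  have hAle : ∀ l : ℝ, 0 ≤ l → (∫ m in Ioi l, F' m * g m) ≤ K * N l := by
    intro l hl
    have h1 : (∫ m in Ioi l, F' m * g m) ≤ ∫ m in Ioi l, K * g m :=
      setIntegral_mono_on (hFgint l hl) ((htail l hl).1.const_mul K) measurableSet_Ioi
        fun m hm => mul_le_mul_of_nonneg_right (hFK m (hl.trans (le_of_lt hm)))
          (hgnn m (lt_of_le_of_lt hl hm))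
    rwa [integral_const_mul, (htail l hl).2] at h1
  -- ψ facts
  have hψnn : ∀ b : ℝ, 0 ≤ b → 0 ≤ ψ b := fun b hb => (hψ b hb).2.2
  have hψmono : ∀ b₁ b₂ : ℝ, 0 ≤ b₁ → b₁ ≤ b₂ → ψ b₁ ≤ ψ b₂ := by
    intro b₁ b₂ h1 h12
    by_contra hcon
    push_neg at hcon
    have := hmono (mem_Ici.2 (hψnn b₂ (h1.trans h12))) (mem_Ici.2 (hψnn b₁ h1)) hcon
    rw [(hψ b₁ h1).2.1, (hψ b₂ (h1.trans h12)).2.1] at this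
    exact absurd h12 (not_le.2 this)
  have hHd' : ∀ b, Hd b = (1 / N (ψ b)) * ∫ m in Ioi (ψ b), F' m * g m := by
    intro b
    rw [hHd b]
  -- bounds on Hd
  have hbound : ∀ b ≥ (0:ℝ), 0 ≤ Hd b ∧ Hd b ≤ K := by
    intro b hb
    have hl : 0 ≤ ψ b := hψnn b hb
    rw [hHd' b]
    constructor
    · exact mul_nonneg (one_div_nonneg.2 (hNpos _).le) (hAnn _ hl)
    · have h1 : (1 / N (ψ b)) * (∫ m in Ioi (ψ b), F' m * g m) ≤ (1 / N (ψ b)) * (K * N (ψ b)) :=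
        mul_le_mul_of_nonneg_left (hAle _ hl) (one_div_nonneg.2 (hNpos _).le)
      have h2 : (1 / N (ψ b)) * (K * N (ψ b)) = K := by
        rw [one_div_mul_eq_div, mul_div_cancel_right₀ K (hNpos _).ne']
      linarith
  -- monotonicity of Hd
  have hHdmono : MonotoneOn Hd (Ici 0) := by
    intro b₁ hb₁ b₂ hb₂ h12
    have hl₁ : 0 ≤ ψ b₁ := hψnn b₁ hb₁
    have hl₂ : 0 ≤ ψ b₂ := hψnn b₂ hb₂
    have hll : ψ b₁ ≤ ψ b₂ := hψmono b₁ b₂ hb₁ h12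
    set l₁ := ψ b₁
    set l₂ := ψ b₂
    have hunion : Ioc l₁ l₂ ∪ Ioi l₂ = Ioi l₁ := Ioc_union_Ioi_eq_Ioi hll
    have hdisj : Disjoint (Ioc l₁ l₂) (Ioi l₂) := Ioc_disjoint_Ioi le_rfl
    have hIocg : IntegrableOn g (Ioc l₁ l₂) := (htail l₁ hl₁).1.mono_set Ioc_subset_Ioi_self
    have hIocF : IntegrableOn (fun m => F' m * g m) (Ioc l₁ l₂) :=
      (hFgint l₁ hl₁).mono_set Ioc_subset_Ioi_self
    have hsplitg : ∫ m in Ioi l₁, g m = (∫ m in Ioc l₁ l₂, g m) + ∫ m in Ioi l₂, g m := by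
      rw [← hunion]
      exact setIntegral_union hdisj measurableSet_Ioi hIocg (htail l₂ hl₂).1
    have hsplitF : ∫ m in Ioi l₁, F' m * g m =
        (∫ m in Ioc l₁ l₂, F' m * g m) + ∫ m in Ioi l₂, F' m * g m := by
      rw [← hunion]
      exact setIntegral_union hdisj measurableSet_Ioi hIocF (hFgint l₂ hl₂)
    have hD : 0 ≤ ∫ m in Ioc l₁ l₂, g m :=
      setIntegral_nonneg measurableSet_Ioc fun m hm => hgnn m (lt_of_le_of_lt hl₁ hm.1)
    have hNd : N l₁ - N l₂ = ∫ m in Ioc l₁ l₂, g m := by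
      have := hsplitg
      rw [(htail l₁ hl₁).2, (htail l₂ hl₂).2] at this
      linarith
    have hNle : N l₂ ≤ N l₁ := by linarith
    have hC : (∫ m in Ioc l₁ l₂, F' m * g m) ≤ F' l₂ * ∫ m in Ioc l₁ l₂, g m := by
      rw [← integral_const_mul]
      exact setIntegral_mono_on hIocF (hIocg.const_mul (F' l₂)) measurableSet_Ioc
        fun m hm => mul_le_mul_of_nonneg_right
          (hF'mono m l₂ (hl₁.trans hm.1.le) hm.2) (hgnn m (lt_of_le_of_lt hl₁ hm.1))
    have hA₂ : F' l₂ * N l₂ ≤ ∫ m in Ioi l₂, F' m * g m := by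
      rw [← (htail l₂ hl₂).2, ← integral_const_mul]
      exact setIntegral_mono_on ((htail l₂ hl₂).1.const_mul (F' l₂)) (hFgint l₂ hl₂)
        measurableSet_Ioi fun m hm => mul_le_mul_of_nonneg_right
          (hF'mono l₂ m hl₂ (le_of_lt hm)) (hgnn m (lt_of_le_of_lt hl₂ hm))
    rw [hHd' b₁, hHd' b₂, one_div_mul_eq_div, one_div_mul_eq_div,
      div_le_div_iff₀ (hNpos l₁) (hNpos l₂), hsplitF]
    have hF'l₂nn : 0 ≤ F' l₂ := hF'nn l₂ hl₂
    nlinarith [mul_le_mul_of_nonneg_right hC (hNpos l₂).le,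
      mul_le_mul_of_nonneg_right hA₂ (sub_nonneg.2 hNle), hD, hNd,
      hAnn l₂ hl₂, (hNpos l₂).le]
  -- interval integrability of Hd
  have hHdInt : ∀ a b : ℝ, 0 ≤ a → a ≤ b → IntervalIntegrable Hd volume a b := by
    intro a b ha hab
    apply MonotoneOn.intervalIntegrable
    rw [uIcc_of_le hab]
    exact hHdmono.mono (fun u hu => ha.trans hu.1)
  refine ⟨?_, hbound, hHdmono, ?_⟩
  · intro b hb
    have := hFgint (ψ b) (hψnn b hb)
    simpa only [hGm, hNm, hgm] using this
  · apply convexOn_of_slope_mono_adjacent (convex_Ici 0)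
    intro x y z hx hz hxy hyz
    simp only [add_sub_add_left_eq_sub]
    have hx0 : (0:ℝ) ≤ x := mem_Ici.1 hx
    have hy0 : (0:ℝ) ≤ y := hx0.trans hxy.le
    have hz0 : (0:ℝ) ≤ z := mem_Ici.1 hz
    have e1 : (∫ s in (0:ℝ)..y, Hd s) - ∫ s in (0:ℝ)..x, Hd s = ∫ s in x..y, Hd s :=
      intervalIntegral.integral_interval_sub_left (hHdInt 0 y le_rfl hy0)
        (hHdInt 0 x le_rfl hx0)
    have e2 : (∫ s in (0:ℝ)..z, Hd s) - ∫ s in (0:ℝ)..y, Hd s = ∫ s in y..z, Hd s :=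
      intervalIntegral.integral_interval_sub_left (hHdInt 0 z le_rfl hz0)
        (hHdInt 0 y le_rfl hy0)
    rw [e1, e2]
    have h1 : (∫ s in x..y, Hd s) ≤ Hd y * (y - x) := by
      have := intervalIntegral.integral_mono_on hxy.le (hHdInt x y hx0 hxy.le)
        intervalIntegrable_const
        (fun u hu => hHdmono (mem_Ici.2 (hx0.trans hu.1)) (mem_Ici.2 hy0) hu.2)
      simpa [smul_eq_mul, mul_comm] using this
    have h2 : Hd y * (z - y) ≤ ∫ s in y..z, Hd s := by
      have := intervalIntegral.integral_mono_on hyz.le intervalIntegrable_const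
        (hHdInt y z hy0 hyz.le)
        (fun u hu => hHdmono (mem_Ici.2 hy0) (mem_Ici.2 (hy0.trans hu.1)) hu.1)
      simpa [smul_eq_mul, mul_comm] using this
    rw [div_le_div_iff₀ (by linarith) (by linarith)]
    nlinarith [mul_le_mul_of_nonneg_right h1 (sub_nonneg.2 hyz.le),
      mul_le_mul_of_nonneg_right h2 (sub_nonneg.2 hxy.le)]
end

section
/- Let F, H, φ be as in the paper's Section 2.1 construction, with γ(l) = H'(φ(l)), Γ(l) = ∫₀^l γ(m) dm, θ(l) = H(φ(l)) − φ(l)H'(φ(l)), and F_{H,φ}(l) = Γ(l) + θ(l). If H is defined from F via H'(b) = (1/ν̄(ψ(b))) ∫_{ψ(b)}^∞ F'(m) ν(dm) with H(0) = F(0), then F_{H,φ} ≡ F. -/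
open MeasureTheory Set Filter Topology Asymptotics

/-- With `H` built from `F` via `H'(b) = (1/ν̄(ψ(b))) ∫_{ψ(b)}^∞ F' dν`, `H(0) = F(0)`,
the function `F_{H,φ}(l) = Γ(l) + θ(l)` coincides with `F`. -/
theorem F_H_phi_eq_F (φ ψ F F' Hd : ℝ → ℝ) (K : ℝ)
    (hcont : ContinuousOn φ (Ici 0))
    (hmono : StrictMonoOn φ (Ici 0))
    (hφ0 : φ 0 = 0)
    (hint0 : ∃ ε > 0, IntervalIntegrable (fun l => 1 / φ l) volume 0 ε)
    (hinf : Tendsto (fun x => ∫ l in (0:ℝ)..x, 1 / φ l) atTop atTop)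
    (hψ : ∀ x ≥ (0:ℝ), ψ (φ x) = x ∧ φ (ψ x) = x ∧ 0 ≤ ψ x)
    (hF : ConvexOn ℝ (Ici 0) F)
    (hFmono : MonotoneOn F (Ici 0))
    (hF' : ∀ x ≥ (0:ℝ), HasDerivAt F (F' x) x)
    (hF'cont : ContinuousOn F' (Ici 0))
    (hFK : ∀ x ≥ (0:ℝ), F' x ≤ K)
    (hHd : ∀ b, Hd b = (1 / Real.exp (-∫ u in (0:ℝ)..(ψ b), 1 / φ u)) *
      ∫ m in Ioi (ψ b), F' m * (Real.exp (-∫ u in (0:ℝ)..m, 1 / φ u) / φ m)) :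
    ∀ l ≥ (0:ℝ),
      (∫ m in (0:ℝ)..l, Hd (φ m)) +
        ((F 0 + ∫ s in (0:ℝ)..(φ l), Hd s) - φ l * Hd (φ l)) = F l := by
  obtain ⟨ε, hε, hεint⟩ := hint0
  set N : ℝ → ℝ := fun x => ∫ u in (0:ℝ)..x, 1 / φ u with hNdef
  set q : ℝ → ℝ := fun m => F' m * (Real.exp (-N m) / φ m) with hqdef
  set w : ℝ → ℝ := fun x => ∫ m in Ioi x, q m with hwdef
  set g : ℝ → ℝ := fun x => Real.exp (N x) * w x with hgdef
  -- basic facts about φ and ψ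
  have hφnn : ∀ x ≥ (0:ℝ), 0 ≤ φ x := by
    intro x hx
    rw [← hφ0]
    exact hmono.monotoneOn self_mem_Ici hx hx
  have hφpos : ∀ x > (0:ℝ), 0 < φ x := by
    intro x hx
    rw [← hφ0]
    exact hmono self_mem_Ici hx.le hx
  have hφmono : ∀ a b : ℝ, 0 ≤ a → a ≤ b → φ a ≤ φ b := fun a b ha hab =>
    hmono.monotoneOn ha (ha.trans hab) hab
  have hψ0 : ψ 0 = 0 := by
    have := (hψ 0 le_rfl).1
    rwa [hφ0] at this
  have hψmono : ∀ a b : ℝ, 0 ≤ a → a ≤ b → ψ a ≤ ψ b := by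
    intro a b ha hab
    by_contra h
    push_neg at h
    have h2 := hmono (hψ b (ha.trans hab)).2.2 (hψ a ha).2.2 h
    rw [(hψ a ha).2.1, (hψ b (ha.trans hab)).2.1] at h2
    exact absurd h2 (not_lt.2 hab)
  -- interval integrability of 1/φ
  have hintφ : ∀ x ≥ (0:ℝ), IntervalIntegrable (fun u => 1 / φ u) volume 0 x := by
    intro x hx
    rcases le_total x ε with h | h
    · exact hεint.mono_set (uIcc_subset_uIcc (by simp) (by simp [mem_uIcc]; left; exact ⟨hx, h⟩))
    · refine hεint.trans ?_
      apply ContinuousOn.intervalIntegrable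
      apply ContinuousOn.div continuousOn_const
      · exact hcont.mono fun u hu => by
          rcases mem_uIcc.1 hu with h' | h' <;> [exact le_trans hε.le h'.1; exact le_trans hx h'.1]
      · intro u hu
        have : ε ≤ u := by
          rcases mem_uIcc.1 hu with h' | h'
          · exact h'.1
          · exact h.trans h'.1
        exact (hφpos u (lt_of_lt_of_le hε this)).ne'
  -- continuity of primitives on Ici 0
  have primCont : ∀ f : ℝ → ℝ, (∀ M ≥ (0:ℝ), IntervalIntegrable f volume 0 M) →
      ContinuousOn (fun x => ∫ u in (0:ℝ)..x, f u) (Ici 0) := by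
    intro f hf x hx
    have hx' : (0:ℝ) ≤ x := hx
    have h1 : IntegrableOn f (uIcc 0 (x + 1)) volume := by
      rw [uIcc_of_le (by linarith), integrableOn_Icc_iff_integrableOn_Ioc]
      exact (intervalIntegrable_iff_integrableOn_Ioc_of_le (by linarith)).mp
        (hf (x + 1) (by linarith))
    have h2 := intervalIntegral.continuousOn_primitive_interval h1
    rw [uIcc_of_le (by linarith : (0:ℝ) ≤ x + 1)] at h2
    have h3 : Icc (0:ℝ) (x + 1) ∈ 𝓝[Ici 0] x := by
      rw [← Ici_inter_Iic]
      exact inter_mem_nhdsWithin _ (Iic_mem_nhds (by linarith))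
    exact (h2 x ⟨hx, by linarith⟩).mono_of_mem_nhdsWithin h3
  have hNcont : ContinuousOn N (Ici 0) := primCont _ hintφ
  have hφIoi : ContinuousOn φ (Ioi 0) := hcont.mono Ioi_subset_Ici_self
  have hNderiv : ∀ x > (0:ℝ), HasDerivAt N (1 / φ x) x := by
    intro x hx
    have hc : ContinuousOn (fun u => 1 / φ u) (Ioi 0) :=
      continuousOn_const.div hφIoi fun u hu => (hφpos u hu).ne'
    exact intervalIntegral.integral_hasDerivAt_right (hintφ x hx.le)
      (hc.stronglyMeasurableAtFilter isOpen_Ioi x hx) (hc.continuousAt (isOpen_Ioi.mem_nhds hx))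
  -- derivative of -exp(-N)
  have hnuderiv : ∀ x ∈ Ioi (0:ℝ),
      HasDerivAt (fun m => -Real.exp (-N m)) (Real.exp (-N x) / φ x) x := by
    intro x hx
    have h := (((hNderiv x hx).neg).exp).neg
    refine h.congr_deriv ?_
    simp only [Pi.neg_apply]
    ring
  have hnutop : Tendsto (fun m => -Real.exp (-N m)) atTop (𝓝 0) := by
    have h1 : Tendsto (fun m => -N m) atTop atBot := tendsto_neg_atBot_iff.2 hinf
    have h2 := Real.tendsto_exp_atBot.comp h1
    have := h2.neg
    rwa [neg_zero] at this
  have hnuIci : ContinuousOn (fun m => -Real.exp (-N m)) (Ici 0) :=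
    (Real.continuous_exp.comp_continuousOn hNcont.neg).neg
  have hp_int : IntegrableOn (fun m => Real.exp (-N m) / φ m) (Ioi 0) volume :=
    integrableOn_Ioi_deriv_of_nonneg (hnuIci 0 self_mem_Ici) hnuderiv
      (fun m hm => div_nonneg (Real.exp_nonneg _) (hφpos m hm).le) hnutop
  -- F' is nonnegative
  have hF'nonneg : ∀ x ≥ (0:ℝ), 0 ≤ F' x := by
    intro x hx
    have hs := hasDerivAt_iff_tendsto_slope.mp (hF' x hx)
    have hs' : Tendsto (slope F x) (𝓝[>] x) (𝓝 (F' x)) :=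
      hs.mono_left (nhdsWithin_mono x fun y hy => ne_of_gt hy)
    refine ge_of_tendsto hs' ?_
    filter_upwards [self_mem_nhdsWithin] with y hy
    have hFle : F x ≤ F y := hFmono hx (hx.trans hy.le) hy.le
    rw [slope_def_field]
    exact div_nonneg (sub_nonneg.2 hFle) (sub_nonneg.2 hy.le)
  have hK0 : 0 ≤ K := le_trans (hF'nonneg 0 le_rfl) (hFK 0 le_rfl)
  have hqcont : ContinuousOn q (Ioi 0) := by
    apply ContinuousOn.mul (hF'cont.mono Ioi_subset_Ici_self)
    exact ((Real.continuous_exp.comp_continuousOn hNcont.neg).mono Ioi_subset_Ici_self).div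
      hφIoi fun u hu => (hφpos u hu).ne'
  have hq_int : IntegrableOn q (Ioi 0) volume := by
    refine Integrable.mono (hp_int.const_mul K) (hqcont.aestronglyMeasurable measurableSet_Ioi) ?_
    filter_upwards [ae_restrict_mem measurableSet_Ioi] with m hm
    have hp0 : 0 ≤ Real.exp (-N m) / φ m := div_nonneg (Real.exp_nonneg _) (hφpos m hm).le
    have hF0 : 0 ≤ F' m := hF'nonneg m (le_of_lt hm)
    rw [Real.norm_eq_abs, Real.norm_eq_abs, abs_of_nonneg (mul_nonneg hF0 hp0),
      abs_of_nonneg (mul_nonneg hK0 hp0)]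
    exact mul_le_mul_of_nonneg_right (hFK m (le_of_lt hm)) hp0
  have hq_int' : ∀ x ≥ (0:ℝ), IntegrableOn q (Ioi x) volume := fun x hx =>
    hq_int.mono_set (Ioi_subset_Ioi hx)
  have hqint01 : ∀ M ≥ (0:ℝ), IntervalIntegrable q volume 0 M := by
    intro M hM
    rw [intervalIntegrable_iff_integrableOn_Ioc_of_le hM]
    exact hq_int.mono_set Ioc_subset_Ioi_self
  -- splitting of w
  have hwsplit : ∀ x ≥ (0:ℝ), w x = w 0 - ∫ m in (0:ℝ)..x, q m := by
    intro x hx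
    have hdisj : Disjoint (Ioc (0:ℝ) x) (Ioi x) := Ioc_disjoint_Ioi le_rfl
    have hsum := setIntegral_union hdisj measurableSet_Ioi
      (hq_int.mono_set Ioc_subset_Ioi_self) (hq_int' x hx)
    rw [Ioc_union_Ioi_eq_Ioi hx] at hsum
    rw [intervalIntegral.integral_of_le hx]
    simp only [hwdef]
    rw [hsum]
    ring
  have hwcont : ContinuousOn w (Ici 0) :=
    (continuousOn_const.sub (primCont q hqint01)).congr fun x hx => hwsplit x hx
  have hwderiv : ∀ x > (0:ℝ), HasDerivAt w (-q x) x := by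
    intro x hx
    have hftc : HasDerivAt (fun y => ∫ m in (0:ℝ)..y, q m) (q x) x :=
      intervalIntegral.integral_hasDerivAt_right (hqint01 x hx.le)
        (hqcont.stronglyMeasurableAtFilter isOpen_Ioi x hx)
        (hqcont.continuousAt (isOpen_Ioi.mem_nhds hx))
    have h2 : HasDerivAt (fun y => w 0 - ∫ m in (0:ℝ)..y, q m) (-q x) x := hftc.const_sub _
    apply h2.congr_of_eventuallyEq
    filter_upwards [isOpen_Ioi.mem_nhds hx] with y (hy : (0:ℝ) < y)
    exact hwsplit y hy.le
  have hgderiv : ∀ x > (0:ℝ), HasDerivAt g ((g x - F' x) / φ x) x := by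
    intro x hx
    have h := ((hNderiv x hx).exp).mul (hwderiv x hx)
    refine h.congr_deriv ?_
    simp only [hgdef, hqdef, Real.exp_neg]
    have h1 : Real.exp (N x) ≠ 0 := Real.exp_ne_zero _
    have h2 : φ x ≠ 0 := (hφpos x hx).ne'
    field_simp
    ring
  have hgcont : ContinuousOn g (Ici 0) :=
    (Real.continuous_exp.comp_continuousOn hNcont).mul hwcont
  -- Hd in terms of g
  have hHdg : ∀ b, Hd b = g (ψ b) := by
    intro b
    rw [hHd b]
    simp only [hgdef, hwdef, hqdef, hNdef, Real.exp_neg, one_div, inv_inv]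
  have hHdφ : ∀ x ≥ (0:ℝ), Hd (φ x) = g x := fun x hx => by rw [hHdg, (hψ x hx).1]
  -- integrability of Hd
  have hψmeas : Measurable fun s => ψ (max s 0) := by
    apply Monotone.measurable
    intro s t hst
    exact hψmono _ _ (le_max_right s 0) (max_le_max hst le_rfl)
  have hgmax : Continuous fun y => g (max y 0) :=
    hgcont.comp_continuous (continuous_id.max continuous_const) fun y => le_max_right y 0
  have hHd_int : ∀ M ≥ (0:ℝ), IntervalIntegrable Hd volume 0 M := by
    intro M hM
    rw [intervalIntegrable_iff_integrableOn_Ioc_of_le hM]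
    obtain ⟨C, hC⟩ := isCompact_Icc.exists_bound_of_continuousOn
      (hgcont.mono (Icc_subset_Ici_self : Icc (0:ℝ) (ψ M) ⊆ Ici 0))
    have hmeasT : Measurable fun s => g (max (ψ (max s 0)) 0) := hgmax.measurable.comp hψmeas
    refine ⟨?_, HasFiniteIntegral.restrict_of_bounded (C := C) measure_Ioc_lt_top ?_⟩
    · apply (hmeasT.aestronglyMeasurable (μ := volume.restrict (Ioc 0 M))).congr
      filter_upwards [ae_restrict_mem measurableSet_Ioc] with s hs
      have h1 : max s 0 = s := max_eq_left hs.1.le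
      have h2 : max (ψ s) 0 = ψ s := max_eq_left (hψ s hs.1.le).2.2
      rw [h1, h2, ← hHdg]
    · filter_upwards [ae_restrict_mem measurableSet_Ioc] with s hs
      rw [hHdg s]
      exact hC (ψ s) ⟨(hψ s hs.1.le).2.2, hψmono s M hs.1.le hs.2⟩
  -- main part
  intro l hl
  have hφl : 0 ≤ φ l := hφnn l hl
  set P : ℝ → ℝ := fun b => ∫ s in (0:ℝ)..b, Hd s with hPdef
  set B : ℝ → ℝ := fun x => P (φ x) - φ x * g x with hBdef
  have hPcont : ContinuousOn P (Icc 0 (φ l)) := by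
    have h1 : IntegrableOn Hd (uIcc 0 (φ l)) volume := by
      rw [uIcc_of_le hφl, integrableOn_Icc_iff_integrableOn_Ioc]
      exact (intervalIntegrable_iff_integrableOn_Ioc_of_le hφl).mp (hHd_int (φ l) hφl)
    have := intervalIntegral.continuousOn_primitive_interval h1
    rwa [uIcc_of_le hφl] at this
  have hmapsTo : ∀ x ∈ Icc (0:ℝ) l, φ x ∈ Icc 0 (φ l) := fun x hx =>
    ⟨hφnn x hx.1, hφmono x l hx.1 hx.2⟩
  have hBcont : ContinuousOn B (Icc 0 l) := by
    apply ContinuousOn.sub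
    · exact hPcont.comp (hcont.mono Icc_subset_Ici_self) hmapsTo
    · exact (hcont.mono Icc_subset_Ici_self).mul (hgcont.mono Icc_subset_Ici_self)
  -- the key derivative computation
  have hBderiv : ∀ x ∈ Ioo (0:ℝ) l, HasDerivAt B (F' x - g x) x := by
    intro x hx
    obtain ⟨hx0, hxl⟩ := hx
    set a : ℝ := x / 2 with hadef
    set b : ℝ := x + 1 with hbdef
    have ha0 : 0 < a := by positivity
    have haxb : a < x ∧ x < b := ⟨by linarith, by linarith⟩
    have hg'cont : ContinuousOn (fun y => (g y - F' y) / φ y) (Icc a b) := by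
      have hsub : Icc a b ⊆ Ici 0 := fun y hy => le_trans ha0.le hy.1
      exact ((hgcont.mono hsub).sub (hF'cont.mono hsub)).div (hcont.mono hsub)
        fun y hy => (hφpos y (lt_of_lt_of_le ha0 hy.1)).ne'
    obtain ⟨C0, hC0⟩ := isCompact_Icc.exists_bound_of_continuousOn hg'cont
    set C : ℝ := max C0 1 with hCdef
    have hCpos : 0 < C := lt_of_lt_of_le one_pos (le_max_right _ _)
    have hlip : ∀ u v, u ∈ Icc a b → v ∈ Icc a b → |g u - g v| ≤ C * |u - v| := by
      intro u v hu hv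
      have := (convex_Icc a b).norm_image_sub_le_of_norm_hasDerivWithin_le
        (f' := fun y => (g y - F' y) / φ y) (C := C)
        (fun y hy => (hgderiv y (lt_of_lt_of_le ha0 hy.1)).hasDerivWithinAt)
        (fun y hy => le_trans (hC0 y hy) (le_max_left C0 1)) hv hu
      simpa [Real.norm_eq_abs] using this
    have hφbnn : 0 ≤ φ b := hφnn b (by linarith)
    have hHdib : IntervalIntegrable Hd volume 0 (φ b) := hHd_int (φ b) hφbnn
    have hint_sub : ∀ y ∈ Ioo a b, IntervalIntegrable Hd volume (φ x) (φ y) := by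
      intro y hy
      apply hHdib.mono_set
      rw [uIcc_of_le hφbnn]
      intro s hs
      rcases mem_uIcc.1 hs with h' | h'
      · exact ⟨le_trans (hφnn x hx0.le) h'.1, le_trans h'.2 (hφmono y b (by linarith [hy.1]) hy.2.le)⟩
      · exact ⟨le_trans (hφnn y (by linarith [hy.1])) h'.1, le_trans h'.2 (hφmono x b hx0.le (by linarith))⟩
    -- key identity
    have key : ∀ᶠ y in 𝓝 x, B y - B x - (y - x) * (F' x - g x)
        = (∫ s in (φ x)..(φ y), (Hd s - g y)) +
          (-(φ x) * (g y - g x - (y - x) * ((g x - F' x) / φ x))) := by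
      filter_upwards [isOpen_Ioo.mem_nhds (show x ∈ Ioo a b from ⟨haxb.1, haxb.2⟩)] with y hy
      have hy0 : 0 ≤ y := le_trans ha0.le hy.1.le
      have hPsplit : P (φ y) - P (φ x) = ∫ s in (φ x)..(φ y), Hd s := by
        have := intervalIntegral.integral_add_adjacent_intervals
          (hHd_int (φ x) (hφnn x hx0.le)) (hint_sub y hy)
        simp only [hPdef]
        linarith [this]
      have hconst : (∫ s in (φ x)..(φ y), (Hd s - g y))
          = (∫ s in (φ x)..(φ y), Hd s) - (φ y - φ x) * g y := by
        rw [intervalIntegral.integral_sub (hint_sub y hy) intervalIntegrable_const,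
          intervalIntegral.integral_const, smul_eq_mul]
      have hφx : φ x ≠ 0 := (hφpos x hx0).ne'
      simp only [hBdef]
      rw [hconst, ← hPsplit]
      field_simp
      ring
    rw [hasDerivAt_iff_isLittleO]
    have hE2 : (fun y => -(φ x) * (g y - g x - (y - x) * ((g x - F' x) / φ x)))
        =o[𝓝 x] fun y => y - x := by
      have := hasDerivAt_iff_isLittleO.mp (hgderiv x hx0)
      simp only [smul_eq_mul] at this
      exact this.const_mul_left _
    have hE1 : (fun y => ∫ s in (φ x)..(φ y), (Hd s - g y)) =o[𝓝 x] fun y => y - x := by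
      rw [Asymptotics.isLittleO_iff]
      intro c hc
      have hφcx : ContinuousAt φ x := hcont.continuousAt (Ici_mem_nhds hx0)
      have hev1 : ∀ᶠ y in 𝓝 x, |φ y - φ x| < c / C := by
        have := Metric.tendsto_nhds.1 hφcx (c / C) (by positivity)
        simpa [Real.dist_eq] using this
      filter_upwards [hev1, isOpen_Ioo.mem_nhds (show x ∈ Ioo a b from ⟨haxb.1, haxb.2⟩)]
        with y hyφ hy
      have hy0 : 0 ≤ y := le_trans ha0.le hy.1.le
      have hminnn : 0 ≤ min x y := le_min hx0.le hy0
      have hbound : ∀ s ∈ Set.uIoc (φ x) (φ y), ‖Hd s - g y‖ ≤ C * |y - x| := by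
        intro s hs
        have hminmax : Set.uIoc (φ x) (φ y) = Ioc (φ (min x y)) (φ (max x y)) := by
          rcases le_total x y with h' | h'
          · rw [uIoc_of_le (hφmono x y hx0.le h'), min_eq_left h', max_eq_right h']
          · rw [uIoc_of_ge (hφmono y x hy0 h'), min_eq_right h', max_eq_left h']
        rw [hminmax] at hs
        have hsnn : 0 ≤ s := le_trans (hφnn _ hminnn) hs.1.le
        have hψs1 : min x y ≤ ψ s := by
          have := hψmono (φ (min x y)) s (hφnn _ hminnn) hs.1.le
          rwa [(hψ (min x y) hminnn).1] at this
        have hψs2 : ψ s ≤ max x y := by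
          have := hψmono s (φ (max x y)) hsnn hs.2
          rwa [(hψ (max x y) (le_trans hminnn (min_le_max))).1] at this
        have hψsab : ψ s ∈ Icc a b :=
          ⟨le_trans (le_min haxb.1.le hy.1.le) hψs1, le_trans hψs2 (max_le (by linarith) hy.2.le)⟩
        have hyab : y ∈ Icc a b := ⟨hy.1.le, hy.2.le⟩
        have hmm : max x y - min x y ≤ |y - x| := by
          rcases le_total x y with h' | h'
          · rw [max_eq_right h', min_eq_left h', abs_of_nonneg (by linarith)]
          · rw [max_eq_left h', min_eq_right h', abs_of_nonpos (by linarith)]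
            linarith
        have habs : |ψ s - y| ≤ |y - x| := by
          have hy1 : min x y ≤ y := min_le_right x y
          have hy2 : y ≤ max x y := le_max_right x y
          rw [abs_le]
          constructor <;> linarith
        rw [hHdg s, Real.norm_eq_abs]
        calc |g (ψ s) - g y| ≤ C * |ψ s - y| := hlip _ _ hψsab hyab
          _ ≤ C * |y - x| := mul_le_mul_of_nonneg_left habs hCpos.le
      have := intervalIntegral.norm_integral_le_of_norm_le_const hbound
      rw [Real.norm_eq_abs]
      calc |∫ s in (φ x)..(φ y), (Hd s - g y)| ≤ C * |y - x| * |φ y - φ x| := this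
        _ ≤ C * |y - x| * (c / C) := by
            apply mul_le_mul_of_nonneg_left hyφ.le (by positivity)
        _ = c * |y - x| := by field_simp
        _ = c * ‖y - x‖ := by rw [Real.norm_eq_abs]
    have := (hE1.add hE2).congr' (key.mono fun y hy => hy.symm) EventuallyEq.rfl
    simpa [smul_eq_mul] using this
  -- assembling via FTC
  have hF'int : IntervalIntegrable F' volume 0 l := by
    apply ContinuousOn.intervalIntegrable
    exact hF'cont.mono (by rw [uIcc_of_le hl]; exact Icc_subset_Ici_self)
  have hgint : IntervalIntegrable g volume 0 l := by
    apply ContinuousOn.intervalIntegrable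
    exact hgcont.mono (by rw [uIcc_of_le hl]; exact Icc_subset_Ici_self)
  have hBint : IntervalIntegrable (fun y => F' y - g y) volume 0 l := hF'int.sub hgint
  have hBftc : ∫ y in (0:ℝ)..l, (F' y - g y) = B l - B 0 :=
    intervalIntegral.integral_eq_sub_of_hasDeriv_right_of_le hl hBcont
      (fun y hy => (hBderiv y hy).hasDerivWithinAt) hBint
  have hB0 : B 0 = 0 := by
    simp [hBdef, hPdef, hφ0]
  have hFftc : ∫ y in (0:ℝ)..l, F' y = F l - F 0 := by
    apply intervalIntegral.integral_eq_sub_of_hasDerivAt _ hF'int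
    intro y hy
    rw [uIcc_of_le hl] at hy
    exact hF' y hy.1
  have hΓ : ∫ m in (0:ℝ)..l, Hd (φ m) = ∫ m in (0:ℝ)..l, g m := by
    apply intervalIntegral.integral_congr
    intro m hm
    rw [uIcc_of_le hl] at hm
    exact hHdφ m hm.1
  have hsplitint : ∫ y in (0:ℝ)..l, (F' y - g y)
      = (∫ y in (0:ℝ)..l, F' y) - ∫ y in (0:ℝ)..l, g y :=
    intervalIntegral.integral_sub hF'int hgint
  rw [hΓ, hHdφ l hl]
  have hBl : B l = P (φ l) - φ l * g l := rfl
  have hPl : P (φ l) = ∫ s in (0:ℝ)..(φ l), Hd s := rfl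
  rw [← hPl]
  linarith [hBftc, hB0, hFftc, hsplitint, hBl]
end

section
/- Let H be a symmetric strictly convex differentiable function on ℝ \ {0}, φ continuous strictly increasing with φ(0)=0, and set γ(l) = H'(φ(l)), Γ(l) = ∫₀^l γ(m) dm, θ(l) = H(φ(l)) − φ(l)H'(φ(l)), F(l) = Γ(l) + θ(l). Then for every t ≥ 0 and every pair (b, l) with b ∈ ℝ, l ≥ 0: H(b) ≥ γ(l)|b| − Γ(l) + F(l), with equality if and only if |b| = φ(l). -/
open MeasureTheory Set Filter

private lemma deriv_even_zero (H : ℝ → ℝ) (hsym : ∀ x : ℝ, H (-x) = H x) :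
    deriv H 0 = 0 := by
  have h : (fun x => H (-x)) = H := funext hsym
  have := deriv_comp_neg H (0 : ℝ)
  rw [h, neg_zero] at this
  linarith

private lemma strict_min (H : ℝ → ℝ) (hsym : ∀ x : ℝ, H (-x) = H x)
    (hconv : StrictConvexOn ℝ Set.univ H) : ∀ x : ℝ, x ≠ 0 → H 0 < H x := by
  intro x hx
  have hne : x ≠ -x := by intro h; apply hx; linarith [h]
  have := hconv.2 (mem_univ x) (mem_univ (-x)) hne (by norm_num : (0:ℝ) < 1/2)
    (by norm_num : (0:ℝ) < 1/2) (by norm_num)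
  simp only [smul_eq_mul, hsym x] at this
  have h0 : (1/2 : ℝ) * x + (1/2 : ℝ) * (-x) = 0 := by ring
  rw [h0] at this
  linarith

/-- Tangent line inequality at `a`, strict for `y ≠ a`, when `a ≠ 0`. -/
private lemma tangent_lt (H : ℝ → ℝ) (hconv : StrictConvexOn ℝ Set.univ H)
    (hdiff : ∀ x : ℝ, x ≠ 0 → DifferentiableAt ℝ H x)
    (a y : ℝ) (ha : a ≠ 0) (hya : y ≠ a) :
    H a + deriv H a * (y - a) < H y := by
  rcases lt_or_gt_of_ne hya with h | h
  · have := hconv.slope_lt_deriv (mem_univ y) (mem_univ a) h (hdiff a ha)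
    rw [slope_def_field, div_lt_iff₀ (by linarith : (0:ℝ) < a - y)] at this
    nlinarith
  · have := hconv.deriv_lt_slope (mem_univ a) (mem_univ y) h (hdiff a ha)
    rw [slope_def_field, lt_div_iff₀ (by linarith : (0:ℝ) < y - a)] at this
    nlinarith

/-- The deterministic pathwise inequality (3): for all real `b` and `l ≥ 0`,
`H(b) ≥ γ(l)|b| - Γ(l) + F(l)`, with equality iff `|b| = φ(l)`. -/
theorem pathwise_inequality_deterministic (H φ : ℝ → ℝ)
    (hsym : ∀ x : ℝ, H (-x) = H x)
    (hconv : StrictConvexOn ℝ Set.univ H)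
    (hdiff : ∀ x : ℝ, x ≠ 0 → DifferentiableAt ℝ H x)
    (hcont : ContinuousOn φ (Ici 0))
    (hmono : StrictMonoOn φ (Ici 0))
    (hφ0 : φ 0 = 0) :
    ∀ (b : ℝ), ∀ l ≥ (0:ℝ),
      (deriv H (φ l) * |b| - (∫ m in (0:ℝ)..l, deriv H (φ m)) +
        ((∫ m in (0:ℝ)..l, deriv H (φ m)) + (H (φ l) - φ l * deriv H (φ l))) ≤ H b) ∧
      (deriv H (φ l) * |b| - (∫ m in (0:ℝ)..l, deriv H (φ m)) +
        ((∫ m in (0:ℝ)..l, deriv H (φ m)) + (H (φ l) - φ l * deriv H (φ l))) = H b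
        ↔ |b| = φ l) := by
  intro b l hl
  set a := φ l with ha_def
  have hHb : H b = H |b| := by
    rcases abs_choice b with h | h
    · rw [h]
    · rw [h, hsym]
  have ha0 : 0 ≤ a := by
    rw [ha_def, ← hφ0]
    rcases eq_or_lt_of_le hl with h | h
    · rw [h]
    · exact (hmono (Set.mem_Ici.mpr (le_refl 0)) (Set.mem_Ici.mpr hl) h).le
  set y := |b| with hy_def
  have key : (H a + deriv H a * (y - a) ≤ H y) ∧
      (H a + deriv H a * (y - a) = H y ↔ y = a) := by
    rcases eq_or_ne y a with hya | hya
    · rw [hya]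
      exact ⟨le_of_eq (by ring), by constructor <;> intro <;> [rfl; ring]⟩
    · rcases eq_or_ne a 0 with ha | ha
      · rw [ha]
        have hd0 : deriv H 0 = 0 := deriv_even_zero H hsym
        have hya' : y ≠ 0 := ha ▸ hya
        have := strict_min H hsym hconv y hya'
        constructor
        · rw [hd0]; linarith
        · constructor
          · intro h; rw [hd0] at h; exfalso; linarith
          · intro h; exact absurd (h.trans ha.symm) hya
      · have := tangent_lt H hconv hdiff a y ha hya
        exact ⟨this.le, ⟨fun h => absurd h this.ne, fun h => absurd h hya⟩⟩
  constructor
  · rw [hHb]; linarith [key.1]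
  · rw [hHb]
    constructor
    · intro h; exact key.2.mp (by linarith)
    · intro h; have := key.2.mpr h; linarith
end

section
/- Let μ be a symmetric centered probability measure on ℝ with positive density and finite first moment, with tail μ̄(x) = μ([x,∞)). Define ψ_μ(x) = ∫₀^x (s/μ̄(s)) μ(ds) for x > 0 and let φ_μ be its inverse. Then ∫₀^u dl/φ_μ(l) = −log(2μ̄(φ_μ(u))) for u > 0; in particular ∫_{0+} dl/φ_μ(l) < ∞ and ∫₀^∞ dl/φ_μ(l) = ∞. -/
open MeasureTheory Set Filter
open scoped ENNReal Topology

lemma map_cdf_restrict (ν : Measure ℝ) (b : ℝ) (hb : 0 < b)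
    (hfin : ν (Ioc 0 b) ≠ ⊤)
    (hstrict : ∀ x y, 0 ≤ x → x < y → y ≤ b →
      (ν (Ioc 0 x)).toReal < (ν (Ioc 0 y)).toReal)
    (hsurj : ∀ t, 0 < t → t < (ν (Ioc 0 b)).toReal →
      ∃ c, 0 < c ∧ c ≤ b ∧ (ν (Ioc 0 c)).toReal = t) :
    Measure.map (fun x => (ν (Ioc 0 (min x b))).toReal) (ν.restrict (Ioc 0 b))
      = volume.restrict (Ioc 0 ((ν (Ioc 0 b)).toReal)) := by
  set F : ℝ → ℝ := fun x => (ν (Ioc 0 (min x b))).toReal with hF_def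
  set A : ℝ := (ν (Ioc 0 b)).toReal with hA_def
  have hfin' : ∀ x, ν (Ioc 0 (min x b)) ≠ ⊤ := fun x =>
    (lt_of_le_of_lt (measure_mono (Ioc_subset_Ioc_right (min_le_right x b)))
      (lt_top_iff_ne_top.mpr hfin)).ne
  have hFeq : ∀ x, x ≤ b → F x = (ν (Ioc 0 x)).toReal := fun x hx => by
    simp only [hF_def, min_eq_left hx]
  have hFmono : Monotone F := by
    intro x y hxy
    exact ENNReal.toReal_mono (hfin' y)
      (measure_mono (Ioc_subset_Ioc_right (min_le_min_right b hxy)))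
  have hFmeas : Measurable F := hFmono.measurable
  have hF0 : F 0 = 0 := by
    simp only [hF_def, min_eq_left hb.le, Ioc_self, measure_empty, ENNReal.toReal_zero]
  have hFpos : ∀ s ∈ Ioc (0:ℝ) b, 0 < F s := by
    intro s hs
    rw [hFeq s hs.2]
    have := hstrict 0 s le_rfl hs.1 hs.2
    simpa using this.trans_le le_rfl |>.trans_le' (by simp)
  have hFb : F b = A := by rw [hFeq b le_rfl]
  have hA0 : 0 ≤ A := ENNReal.toReal_nonneg
  haveI : IsFiniteMeasure (ν.restrict (Ioc 0 b)) := by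
    constructor
    rw [Measure.restrict_apply_univ]
    exact lt_top_iff_ne_top.mpr hfin
  refine Measure.ext_of_Iic _ _ (fun t => ?_)
  rw [Measure.map_apply hFmeas measurableSet_Iic,
    Measure.restrict_apply (hFmeas measurableSet_Iic),
    Measure.restrict_apply measurableSet_Iic]
  rcases le_or_gt t 0 with ht | ht
  · have h1 : F ⁻¹' Iic t ∩ Ioc 0 b = ∅ := by
      ext s
      simp only [mem_inter_iff, mem_preimage, mem_Iic, mem_empty_iff_false, iff_false, not_and]
      intro hs hsb
      exact absurd (hs.trans ht) (not_le.mpr (hFpos s hsb))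
    have h2 : Iic t ∩ Ioc 0 A = ∅ := by
      apply eq_empty_iff_forall_notMem.mpr
      rintro s ⟨hs, hh, -⟩
      exact absurd (hs.trans ht) (not_le.mpr hh)
    rw [h1, h2]
    simp
  rcases lt_or_ge t A with htA | htA
  · obtain ⟨c, hc0, hcb, hct⟩ := hsurj t ht htA
    have hFc : F c = t := by rw [hFeq c hcb]; exact hct
    have hset : F ⁻¹' Iic t ∩ Ioc 0 b = Ioc 0 c := by
      ext s
      simp only [mem_inter_iff, mem_preimage, mem_Iic, mem_Ioc]
      constructor
      · rintro ⟨h1, h2, h3⟩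
        refine ⟨h2, ?_⟩
        by_contra hcs
        push_neg at hcs
        have := hstrict c s hc0.le hcs h3
        rw [← hFeq c hcb, ← hFeq s h3, hFc] at this
        exact absurd h1 (not_le.mpr this)
      · rintro ⟨h1, h2⟩
        exact ⟨hFc ▸ hFmono h2, h1, h2.trans hcb⟩
    rw [hset]
    have h2 : Iic t ∩ Ioc 0 A = Ioc 0 t := by
      ext s
      simp only [mem_inter_iff, mem_Iic, mem_Ioc]
      exact ⟨fun ⟨h1, h2, _⟩ => ⟨h2, h1⟩, fun ⟨h1, h2⟩ => ⟨h2, h1, h2.trans htA.le⟩⟩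
    rw [h2, Real.volume_Ioc, sub_zero, ← hct,
      ENNReal.ofReal_toReal ((lt_of_le_of_lt (measure_mono (Ioc_subset_Ioc_right hcb))
        (lt_top_iff_ne_top.mpr hfin)).ne)]
  · have hset : F ⁻¹' Iic t ∩ Ioc 0 b = Ioc 0 b := by
      apply inter_eq_right.mpr
      intro s hs
      have : F s ≤ F b := hFmono hs.2
      exact le_trans (this.trans_eq hFb) htA
    have h2 : Iic t ∩ Ioc 0 A = Ioc 0 A := by
      apply inter_eq_right.mpr
      intro s hs
      exact hs.2.trans htA
    rw [hset, h2, Real.volume_Ioc, sub_zero, hA_def, ENNReal.ofReal_toReal hfin]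

/-- For a symmetric centered μ with positive density and finite first moment, with
`ψ_μ(x) = ∫₀^x (s/μ̄(s)) μ(ds)` and `φ_μ = ψ_μ⁻¹`, one has
`∫₀^u dl/φ_μ(l) = -log(2 μ̄(φ_μ(u)))`; in particular `∫_{0+} dl/φ_μ < ∞` and
`∫₀^∞ dl/φ_μ = ∞`. -/
theorem phi_mu_integral_identity
    (μ : Measure ℝ) [IsProbabilityMeasure μ]
    (hsym : μ.map (fun x => -x) = μ)
    (f : ℝ → ℝ≥0∞) (hfpos : ∀ x, 0 < f x) (hμf : μ = volume.withDensity f)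
    (hcent : ∫ x, x ∂μ = 0)
    (hmom : Integrable (fun x => |x|) μ)
    (φ : ℝ → ℝ)
    (hinv1 : ∀ x ≥ (0:ℝ),
      φ (∫ s in Ioc (0:ℝ) x, s / (μ (Ici s)).toReal ∂μ) = x)
    (hinv2 : ∀ u ≥ (0:ℝ),
      ∫ s in Ioc (0:ℝ) (φ u), s / (μ (Ici s)).toReal ∂μ = u) :
    (∀ u > (0:ℝ),
      ∫ l in (0:ℝ)..u, 1 / φ l = -Real.log (2 * (μ (Ici (φ u))).toReal)) ∧
    (∀ u > (0:ℝ), IntervalIntegrable (fun l => 1 / φ l) volume 0 u) ∧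
    Tendsto (fun u => ∫ l in (0:ℝ)..u, 1 / φ l) atTop atTop := by
  classical
  -- basic structure on μ
  have hatom : ∀ x : ℝ, μ {x} = 0 := by
    intro x
    rw [hμf, withDensity_apply _ (measurableSet_singleton x),
      Measure.restrict_eq_zero.mpr (Real.volume_singleton), lintegral_zero_measure]
  haveI : NullSingletonClass μ := ⟨hatom⟩
  set Rr : ℝ → ℝ := fun s => (μ (Ici s)).toReal with hRr_def
  set ψ : ℝ → ℝ := fun x => ∫ s in Ioc (0:ℝ) x, s / Rr s ∂μ with hψ_def
  have hRr_anti : Antitone Rr := fun s t hst =>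
    ENNReal.toReal_mono (measure_ne_top μ _) (measure_mono (Ici_subset_Ici.mpr hst))
  have hRr_meas : Measurable Rr := hRr_anti.measurable
  have hhmeas : Measurable fun s : ℝ => s / Rr s := measurable_id.div hRr_meas
  have hinv1' : ∀ x ≥ (0:ℝ), φ (ψ x) = x := hinv1
  have hinv2' : ∀ u ≥ (0:ℝ), ψ (φ u) = u := hinv2
  have hψ0 : ψ 0 = 0 := by
    simp [hψ_def]
  have hφ0 : φ 0 = 0 := by
    have := hinv1' 0 le_rfl
    rwa [hψ0] at this
  -- the tail is everywhere nonzero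
  have hRne : ∀ x : ℝ, μ (Ici x) ≠ 0 := by
    intro x hx0
    set z := max x 1 with hz
    have hz0 : (0:ℝ) ≤ z := le_trans zero_le_one (le_max_right x 1)
    have hzx : μ (Ici z) = 0 := measure_mono_null (Ici_subset_Ici.mpr (le_max_left x 1)) hx0
    have hae : (Ioc (0:ℝ) z : Set ℝ) =ᵐ[μ] Ioc (0:ℝ) (z+1) := by
      apply (ae_eq_set (μ := μ)).mpr
      constructor
      · rw [diff_eq_empty.mpr (Ioc_subset_Ioc_right (by linarith))]
        exact measure_empty
      · refine measure_mono_null ?_ hzx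
        rintro s ⟨hs1, hs2⟩
        simp only [mem_Ioc, not_and, not_le] at hs1 hs2
        exact le_of_lt (hs2 hs1.1)
    have hψz : ψ z = ψ (z+1) := by
      simp only [hψ_def]
      rw [Measure.restrict_congr_set hae]
    have h1 := hinv1' z hz0
    have h2 := hinv1' (z+1) (by linarith)
    rw [hψz, h2] at h1
    linarith
  have hRrpos : ∀ x : ℝ, 0 < Rr x := fun x =>
    ENNReal.toReal_pos (hRne x) (measure_ne_top μ _)
  -- integrability of the density of ψ on bounded intervals
  have hIntOn : ∀ x : ℝ, IntegrableOn (fun s => s / Rr s) (Ioc 0 x) μ := by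
    intro x
    rcases le_or_gt x 0 with hx | hx
    · rw [Ioc_eq_empty (not_lt.mpr hx)]
      exact integrableOn_empty
    · refine ⟨hhmeas.aestronglyMeasurable.restrict, ?_⟩
      apply HasFiniteIntegral.of_bounded (C := x / Rr x)
      refine (ae_restrict_iff' measurableSet_Ioc).mpr (ae_of_all _ ?_)
      intro s hs
      rw [Real.norm_eq_abs, abs_of_nonneg (div_nonneg hs.1.le ENNReal.toReal_nonneg)]
      exact div_le_div₀ hx.le hs.2 (hRrpos x) (hRr_anti hs.2)
  have hψnonneg : ∀ x : ℝ, 0 ≤ ψ x := fun x =>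
    setIntegral_nonneg measurableSet_Ioc fun s hs => div_nonneg hs.1.le ENNReal.toReal_nonneg
  have hψadd : ∀ x y : ℝ, 0 ≤ x → x ≤ y → ψ y = ψ x + ∫ s in Ioc x y, s / Rr s ∂μ := by
    intro x y hx hxy
    simp only [hψ_def]
    rw [← Ioc_union_Ioc_eq_Ioc hx hxy,
      setIntegral_union (Ioc_disjoint_Ioc_of_le le_rfl) measurableSet_Ioc (hIntOn x)
        (((hIntOn y).mono_set (Ioc_subset_Ioc_left hx)))]
  have hψmono : ∀ x y : ℝ, 0 ≤ x → x ≤ y → ψ x ≤ ψ y := by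
    intro x y hx hxy
    rw [hψadd x y hx hxy]
    exact le_add_of_nonneg_right (setIntegral_nonneg measurableSet_Ioc fun s hs =>
      div_nonneg (hx.trans hs.1.le) ENNReal.toReal_nonneg)
  have hψstrict : ∀ x y : ℝ, 0 ≤ x → x < y → ψ x < ψ y := by
    intro x y hx hxy
    refine lt_of_le_of_ne (hψmono x y hx hxy.le) fun he => ?_
    have h1 := hinv1' x hx
    have h2 := hinv1' y (hx.trans hxy.le)
    rw [he, h2] at h1
    linarith
  have hφpos : ∀ u : ℝ, 0 < u → 0 < φ u := by
    intro u hu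
    by_contra hle
    push_neg at hle
    have h2 := hinv2' u hu.le
    have h3 : ψ (φ u) = 0 := by
      simp only [hψ_def]
      rw [Ioc_eq_empty (not_lt.mpr hle)]
      simp
    rw [h3] at h2
    linarith
  have hφnonneg : ∀ u : ℝ, 0 ≤ u → 0 ≤ φ u := by
    intro u hu
    rcases eq_or_lt_of_le hu with h | h
    · rw [← h, hφ0]
    · exact (hφpos u h).le
  have hφmono : ∀ v w : ℝ, 0 ≤ v → v ≤ w → φ v ≤ φ w := by
    intro v w hv hvw
    by_contra hlt
    push_neg at hlt
    have h1 := hinv2' v hv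
    have h2 := hinv2' w (hv.trans hvw)
    have := hψmono (φ w) (φ v) (hφnonneg w (hv.trans hvw)) hlt.le
    rw [h1, h2] at this
    have hvw' : v = w := le_antisymm hvw this
    rw [hvw'] at hlt
    exact lt_irrefl _ hlt
  -- strict positivity of μ on intervals in [0, ∞)
  have hμIocpos : ∀ x y : ℝ, 0 ≤ x → x < y → μ (Ioc x y) ≠ 0 := by
    intro x y hx hxy h0
    have hae : (Ioc (0:ℝ) x : Set ℝ) =ᵐ[μ] Ioc (0:ℝ) y := by
      apply (ae_eq_set (μ := μ)).mpr
      constructor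
      · rw [diff_eq_empty.mpr (Ioc_subset_Ioc_right hxy.le)]
        exact measure_empty
      · refine measure_mono_null ?_ h0
        rintro s ⟨hs1, hs2⟩
        simp only [mem_Ioc, not_and, not_le] at hs1 hs2
        exact ⟨hs2 hs1.1, hs1.2⟩
    have hψxy : ψ x = ψ y := by
      simp only [hψ_def]
      rw [Measure.restrict_congr_set hae]
    exact absurd hψxy (ne_of_lt (hψstrict x y hx hxy))
  -- symmetry: μ (Ioi 0) = 1/2
  have hIoi0 : μ (Ioi (0:ℝ)) + μ (Ioi 0) = 1 := by
    have hmirror : μ (Iio (0:ℝ)) = μ (Ioi 0) := by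
      conv_lhs => rw [← hsym]
      rw [Measure.map_apply measurable_neg measurableSet_Iio]
      congr 1
      ext x
      simp
    have hcompl := measure_add_measure_compl (μ := μ) (measurableSet_Iio (a := (0:ℝ)))
    rw [compl_Iio, measure_univ, hmirror,
      show μ (Ici (0:ℝ)) = μ (Ioi 0) from (measure_congr (Ioi_ae_eq_Ici (a := (0:ℝ)))).symm]
      at hcompl
    exact hcompl
  have hhalf : (μ (Ioi (0:ℝ))).toReal = 1/2 := by
    have := congrArg ENNReal.toReal hIoi0
    rw [ENNReal.toReal_add (measure_ne_top μ _) (measure_ne_top μ _), ENNReal.toReal_one] at this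
    linarith
  have htail : ∀ s : ℝ, 0 < s → Rr s = 1/2 - (μ (Ioc 0 s)).toReal := by
    intro s hs
    have hu : Ioc (0:ℝ) s ∪ Ioi s = Ioi 0 := Ioc_union_Ioi_eq_Ioi hs.le
    have hd := measure_union (μ := μ) (Ioc_disjoint_Ioi_same (a := (0:ℝ)) (b := s))
      measurableSet_Ioi
    rw [hu] at hd
    have hRr : Rr s = (μ (Ioi s)).toReal :=
      congrArg ENNReal.toReal (measure_congr (Ioi_ae_eq_Ici (a := s))).symm
    have := congrArg ENNReal.toReal hd
    rw [ENNReal.toReal_add (measure_ne_top μ _) (measure_ne_top μ _), hhalf] at this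
    rw [hRr]
    linarith
  -- continuity of the cdf
  have hGeq : ∀ x, ProbabilityTheory.cdf μ x = (μ (Iic x)).toReal :=
    fun x => ProbabilityTheory.cdf_eq_real μ x
  have hGcont : Continuous (ProbabilityTheory.cdf μ) := by
    rw [continuous_iff_continuousAt]
    intro x
    rw [(ProbabilityTheory.monotone_cdf μ).continuousAt_iff_leftLim_eq_rightLim]
    have h1 : (ProbabilityTheory.cdf μ).measure {x} = 0 := by
      rw [ProbabilityTheory.measure_cdf]
      exact hatom x
    rw [StieltjesFunction.measure_singleton, ENNReal.ofReal_eq_zero] at h1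
    have h2 := (ProbabilityTheory.monotone_cdf μ).leftLim_le (le_refl x)
    rw [(ProbabilityTheory.cdf μ).rightLim_eq x]
    linarith
  have hF2G : ∀ x : ℝ, 0 ≤ x →
      (μ (Ioc 0 x)).toReal = ProbabilityTheory.cdf μ x - ProbabilityTheory.cdf μ 0 := by
    intro x hx
    have hu : Iic (0:ℝ) ∪ Ioc 0 x = Iic x := Iic_union_Ioc_eq_Iic hx
    have hd := measure_union (μ := μ) (Iic_disjoint_Ioc (c := x) (le_refl (0:ℝ)))
      (measurableSet_Ioc (a := (0:ℝ)) (b := x))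
    rw [hu] at hd
    rw [hGeq, hGeq, hd, ENNReal.toReal_add (measure_ne_top μ _) (measure_ne_top μ _)]
    ring
  -- monotone surrogate for φ
  set φ' : ℝ → ℝ := fun l => φ (max l 0) with hφ'_def
  have hφ'mono : Monotone φ' := fun a c hac =>
    hφmono (max a 0) (max c 0) (le_max_right a 0) (max_le_max hac le_rfl)
  have hφ'meas : Measurable φ' := hφ'mono.measurable
  have hφ'eq : ∀ l : ℝ, 0 < l → φ' l = φ l := by
    intro l hl
    rw [hφ'_def]
    simp only
    rw [max_eq_left hl.le]
  have haemeas : ∀ u : ℝ, AEStronglyMeasurable (fun l => 1 / φ l)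
      (volume.restrict (Ioc (0:ℝ) u)) := by
    intro u
    have hsur : Measurable fun l : ℝ => 1 / φ' l := measurable_const.div hφ'meas
    refine (hsur.aestronglyMeasurable).congr ?_
    filter_upwards [ae_restrict_mem measurableSet_Ioc] with l hl
    rw [hφ'eq l hl.1]
  -- the key computation
  have key : ∀ u : ℝ, 0 < u →
      (∫⁻ l in Ioc (0:ℝ) u, ENNReal.ofReal (1 / φ l) ∂volume
        = ENNReal.ofReal (-Real.log (2 * Rr (φ u)))) ∧
      0 ≤ -Real.log (2 * Rr (φ u)) := by
    intro u hu
    set b := φ u with hb_def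
    have hb : 0 < b := hφpos u hu
    have hbu : ψ b = u := hinv2' u hu.le
    set T : ℝ → ℝ≥0∞ := fun s => ENNReal.ofReal (s / Rr s) with hT_def
    have hTmeas : Measurable T := ENNReal.measurable_ofReal.comp hhmeas
    set ν₁ : Measure ℝ := μ.withDensity T with hν₁_def
    have hν₁eq : ∀ x : ℝ, 0 ≤ x → ν₁ (Ioc 0 x) = ENNReal.ofReal (ψ x) := by
      intro x hx
      rw [hν₁_def, withDensity_apply _ measurableSet_Ioc]
      exact (ofReal_integral_eq_lintegral_ofReal (hIntOn x)
        ((ae_restrict_iff' measurableSet_Ioc).mpr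
          (ae_of_all _ fun s hs => div_nonneg hs.1.le ENNReal.toReal_nonneg))).symm
    have hν₁toReal : ∀ x : ℝ, 0 ≤ x → (ν₁ (Ioc 0 x)).toReal = ψ x := by
      intro x hx
      rw [hν₁eq x hx, ENNReal.toReal_ofReal (hψnonneg x)]
    have hmap1 := map_cdf_restrict ν₁ b hb
      (by rw [hν₁eq b hb.le]; exact ENNReal.ofReal_ne_top)
      (by
        intro x y hx hxy hyb
        rw [hν₁toReal x hx, hν₁toReal y (hx.trans hxy.le)]
        exact hψstrict x y hx hxy)
      (by
        intro t ht htb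
        rw [hν₁toReal b hb.le, hbu] at htb
        exact ⟨φ t, hφpos t ht, hφmono t u ht.le htb.le, by
          rw [hν₁toReal _ (hφpos t ht).le, hinv2' t ht.le]⟩)
    rw [hν₁toReal b hb.le, hbu] at hmap1
    set Ψc : ℝ → ℝ := fun x => (ν₁ (Ioc 0 (min x b))).toReal with hΨc_def
    have hΨcmono : Monotone Ψc := by
      intro x y hxy
      refine ENNReal.toReal_mono ?_ (measure_mono (Ioc_subset_Ioc_right (min_le_min_right b hxy)))
      exact ((measure_mono (Ioc_subset_Ioc_right (min_le_right y b))).trans_lt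
        (by rw [hν₁eq b hb.le]; exact ENNReal.ofReal_lt_top)).ne
    have hΨcmeas : Measurable Ψc := hΨcmono.measurable
    set g : ℝ → ℝ≥0∞ := fun l => ENNReal.ofReal (1 / φ' l) with hg_def
    have hg : Measurable g := ENNReal.measurable_ofReal.comp (measurable_const.div hφ'meas)
    set g₂ : ℝ → ℝ≥0∞ := fun t => ENNReal.ofReal ((1/2 - t)⁻¹) with hg₂_def
    have hg₂ : Measurable g₂ :=
      ENNReal.measurable_ofReal.comp ((measurable_const.sub measurable_id).inv)
    set F2c : ℝ → ℝ := fun s => (μ (Ioc 0 (min s b))).toReal with hF2c_def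
    have hF2cmono : Monotone F2c := fun x y hxy =>
      ENNReal.toReal_mono (measure_ne_top μ _)
        (measure_mono (Ioc_subset_Ioc_right (min_le_min_right b hxy)))
    have hF2cmeas : Measurable F2c := hF2cmono.measurable
    have hmap2 := map_cdf_restrict μ b hb (measure_ne_top μ _)
      (by
        intro x y hx hxy hyb
        have hd := measure_union (μ := μ) (Ioc_disjoint_Ioc_of_le (a := (0:ℝ)) (b := x) (c := x) (d := y) le_rfl)
          measurableSet_Ioc
        rw [Ioc_union_Ioc_eq_Ioc hx hxy.le] at hd
        rw [hd, ENNReal.toReal_add (measure_ne_top μ _) (measure_ne_top μ _)]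
        have := ENNReal.toReal_pos (hμIocpos x y hx hxy) (measure_ne_top μ _)
        linarith)
      (by
        intro t ht htA
        have hmem : ProbabilityTheory.cdf μ 0 + t ∈
            Ioc (ProbabilityTheory.cdf μ 0) (ProbabilityTheory.cdf μ b) := by
          constructor
          · linarith
          · have := hF2G b hb.le
            linarith
        obtain ⟨c, hc, hceq⟩ := intermediate_value_Ioc hb.le hGcont.continuousOn hmem
        refine ⟨c, hc.1, hc.2, ?_⟩
        have := hF2G c hc.1.le
        rw [this, hceq]
        ring)
    set A : ℝ := (μ (Ioc 0 b)).toReal with hA_def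
    have hA : A = 1/2 - Rr b := by
      have := htail b hb
      rw [hA_def]
      linarith
    have hRb : 0 < Rr b := hRrpos b
    have hRb2 : Rr b ≤ 1/2 := by
      rw [hRr_def]
      simp only
      rw [← hhalf]
      exact ENNReal.toReal_mono (measure_ne_top μ _)
        (measure_mono fun s hs => lt_of_lt_of_le hb hs)
    have hA0 : 0 ≤ A := ENNReal.toReal_nonneg
    have hA2 : A < 1/2 := by rw [hA]; linarith
    -- chain of equalities
    have step0 : ∫⁻ l in Ioc (0:ℝ) u, ENNReal.ofReal (1 / φ l) ∂volume
        = ∫⁻ l in Ioc (0:ℝ) u, g l ∂volume := by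
      refine setLIntegral_congr_fun measurableSet_Ioc (fun l hl => ?_)
      rw [hg_def]
      simp only
      rw [hφ'eq l hl.1]
    have step1 : ∫⁻ l in Ioc (0:ℝ) u, g l ∂volume
        = ∫⁻ s, g (Ψc s) ∂(ν₁.restrict (Ioc 0 b)) := by
      rw [← hmap1, lintegral_map hg hΨcmeas]
    have step2 : ∫⁻ s, g (Ψc s) ∂(ν₁.restrict (Ioc 0 b))
        = ∫⁻ s in Ioc (0:ℝ) b, (T s) * g (Ψc s) ∂μ := by
      have h0 := lintegral_withDensity_eq_lintegral_mul (μ.restrict (Ioc 0 b)) hTmeas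
        (hg.comp hΨcmeas)
      rw [hν₁_def, restrict_withDensity measurableSet_Ioc]
      exact h0
    have step3 : ∫⁻ s in Ioc (0:ℝ) b, (T s) * g (Ψc s) ∂μ
        = ∫⁻ s in Ioc (0:ℝ) b, g₂ (F2c s) ∂μ := by
      refine setLIntegral_congr_fun measurableSet_Ioc (fun s hs => ?_)
      have hΨcs : Ψc s = ψ s := by
        rw [hΨc_def]
        simp only
        rw [min_eq_left hs.2, hν₁toReal s hs.1.le]
      have hφψ : φ' (ψ s) = s := by
        rw [hφ'_def]
        simp only
        rw [max_eq_left (hψnonneg s), hinv1' s hs.1.le]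
      have h1 : g (Ψc s) = ENNReal.ofReal (1 / s) := by
        rw [hg_def]
        simp only
        rw [hΨcs, hφψ]
      rw [h1, hT_def]
      simp only
      rw [← ENNReal.ofReal_mul (div_nonneg hs.1.le ENNReal.toReal_nonneg)]
      have hs0 : s ≠ 0 := ne_of_gt hs.1
      have hr0 : Rr s ≠ 0 := (hRrpos s).ne'
      have : s / Rr s * (1 / s) = (1/2 - F2c s)⁻¹ := by
        rw [hF2c_def]
        simp only
        rw [min_eq_left hs.2, ← htail s hs.1]
        field_simp
      rw [this, hg₂_def]
    have step4 : ∫⁻ s in Ioc (0:ℝ) b, g₂ (F2c s) ∂μ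
        = ∫⁻ t in Ioc (0:ℝ) A, g₂ t ∂volume := by
      rw [← hmap2, lintegral_map hg₂ hF2cmeas]
    -- compute the last integral
    haveI : IsFiniteMeasure (volume.restrict (Ioc (0:ℝ) A)) := by
      constructor
      rw [Measure.restrict_apply_univ, Real.volume_Ioc]
      exact ENNReal.ofReal_lt_top
    have hk_int : IntegrableOn (fun t : ℝ => (1/2 - t)⁻¹) (Ioc 0 A) volume := by
      refine ⟨((measurable_const.sub measurable_id).inv).aestronglyMeasurable.restrict, ?_⟩
      apply HasFiniteIntegral.of_bounded (C := (1/2 - A)⁻¹)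
      refine (ae_restrict_iff' measurableSet_Ioc).mpr (ae_of_all _ ?_)
      intro t ht
      have h1 : 0 < 1/2 - A := by linarith
      have h2 : 1/2 - A ≤ 1/2 - t := by linarith [ht.2]
      rw [Real.norm_eq_abs, abs_of_nonneg (inv_nonneg.mpr (by linarith))]
      exact inv_anti₀ h1 h2
    have hk_nonneg : 0 ≤ᵐ[volume.restrict (Ioc (0:ℝ) A)] fun t : ℝ => (1/2 - t)⁻¹ := by
      refine (ae_restrict_iff' measurableSet_Ioc).mpr (ae_of_all _ ?_)
      intro t ht
      have : 0 < 1/2 - t := by linarith [ht.2]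
      positivity
    have step5 : ∫⁻ t in Ioc (0:ℝ) A, g₂ t ∂volume
        = ENNReal.ofReal (∫ t in Ioc (0:ℝ) A, (1/2 - t)⁻¹ ∂volume) :=
      (ofReal_integral_eq_lintegral_ofReal hk_int hk_nonneg).symm
    have hIcalc : ∫ t in Ioc (0:ℝ) A, (1/2 - t)⁻¹ ∂volume = -Real.log (2 * Rr b) := by
      rw [← intervalIntegral.integral_of_le hA0]
      have hsub : (∫ t in (0:ℝ)..A, (1/2 - t)⁻¹) = ∫ x in (1/2 - A)..(1/2 - 0), x⁻¹ :=
        intervalIntegral.integral_comp_sub_left (fun x : ℝ => x⁻¹) (1/2)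
      have hRbA : (1:ℝ)/2 - A = Rr b := by rw [hA]; ring
      rw [hsub, sub_zero, integral_inv (notMem_uIcc_of_lt (by linarith) (by norm_num)),
        hRbA, Real.log_div (by norm_num) hRb.ne', Real.log_mul two_ne_zero hRb.ne']
      have hlog2 : Real.log (1/2) = -Real.log 2 := by rw [one_div, Real.log_inv]
      linarith
    rw [step0, step1, step2, step3, step4, step5, hIcalc]
    have hlogpos : 0 ≤ -Real.log (2 * Rr b) := by
      have : Real.log (2 * Rr b) ≤ 0 :=
        Real.log_nonpos (by linarith) (by linarith)
      linarith
    exact ⟨rfl, hlogpos⟩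
  -- assemble the three statements
  have hnonneg_ae : ∀ u : ℝ, 0 ≤ᵐ[volume.restrict (Ioc (0:ℝ) u)] fun l => 1 / φ l := by
    intro u
    refine (ae_restrict_iff' measurableSet_Ioc).mpr (ae_of_all _ ?_)
    intro l hl
    exact one_div_nonneg.mpr (hφpos l hl.1).le
  have hpart1 : ∀ u > (0:ℝ),
      ∫ l in (0:ℝ)..u, 1 / φ l = -Real.log (2 * Rr (φ u)) := by
    intro u hu
    rw [intervalIntegral.integral_of_le hu.le,
      integral_eq_lintegral_of_nonneg_ae (hnonneg_ae u) (haemeas u),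
      (key u hu).1, ENNReal.toReal_ofReal (key u hu).2]
  have hpart2 : ∀ u > (0:ℝ), IntervalIntegrable (fun l => 1 / φ l) volume 0 u := by
    intro u hu
    rw [intervalIntegrable_iff_integrableOn_Ioc_of_le hu.le]
    refine ⟨haemeas u, ?_⟩
    rw [hasFiniteIntegral_iff_norm]
    have heq : ∫⁻ l in Ioc (0:ℝ) u, ENNReal.ofReal ‖1 / φ l‖ ∂volume
        = ∫⁻ l in Ioc (0:ℝ) u, ENNReal.ofReal (1 / φ l) ∂volume := by
      refine setLIntegral_congr_fun measurableSet_Ioc (fun l hl => ?_)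
      rw [Real.norm_eq_abs, abs_of_nonneg (one_div_nonneg.mpr (hφpos l hl.1).le)]
    rw [heq, (key u hu).1]
    exact ENNReal.ofReal_lt_top
  refine ⟨hpart1, hpart2, ?_⟩
  -- divergence at infinity
  have hRtail : ∀ x : ℝ, Rr x = 1 - ProbabilityTheory.cdf μ x := by
    intro x
    have hcompl := measure_add_measure_compl (μ := μ) (measurableSet_Iic (a := x))
    rw [compl_Iic, measure_univ] at hcompl
    have h1 : Rr x = (μ (Ioi x)).toReal :=
      congrArg ENNReal.toReal (measure_congr (Ioi_ae_eq_Ici (a := x))).symm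
    have := congrArg ENNReal.toReal hcompl
    rw [ENNReal.toReal_add (measure_ne_top μ _) (measure_ne_top μ _),
      ENNReal.toReal_one] at this
    rw [h1, hGeq]
    linarith
  have hφtop : Tendsto φ atTop atTop := by
    rw [tendsto_atTop]
    intro M
    filter_upwards [eventually_ge_atTop (ψ (max M 0))] with u hu
    calc M ≤ max M 0 := le_max_left _ _
      _ = φ (ψ (max M 0)) := (hinv1' _ (le_max_right _ _)).symm
      _ ≤ φ u := hφmono _ _ (hψnonneg _) hu
  have hRr0 : Tendsto (fun u => Rr (φ u)) atTop (𝓝 0) := by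
    have h1 : Tendsto (fun u => 1 - ProbabilityTheory.cdf μ (φ u)) atTop (𝓝 (1 - 1)) :=
      tendsto_const_nhds.sub ((ProbabilityTheory.tendsto_cdf_atTop μ).comp hφtop)
    rw [sub_self] at h1
    exact h1.congr fun u => (hRtail (φ u)).symm
  have hlog : Tendsto (fun u => Real.log (2 * Rr (φ u))) atTop atBot := by
    apply Real.tendsto_log_nhdsGT_zero.comp
    rw [tendsto_nhdsWithin_iff]
    constructor
    · simpa using hRr0.const_mul 2
    · exact Eventually.of_forall fun u => mem_Ioi.mpr (mul_pos two_pos (hRrpos _))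
  have hfinal : Tendsto (fun u => -Real.log (2 * Rr (φ u))) atTop atTop :=
    tendsto_neg_atBot_atTop.comp hlog
  refine hfinal.congr' ?_
  filter_upwards [eventually_gt_atTop (0:ℝ)] with u hu
  exact (hpart1 u hu).symm
end

section
/- Let μ be a symmetric centered probability measure on ℝ with positive density, φ_μ the inverse of ψ_μ(x) = ∫₀^x (s/μ̄(s)) μ(ds), and ν_μ the measure with tail ν̄_μ(l) = exp(−∫₀^l dm/φ_μ(m)). Then ν̄_μ(l) = 2 μ̄(φ_μ(l)) for all l ≥ 0. -/
open MeasureTheory Set Filter Topology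
open scoped ENNReal

/-! ### Auxiliary lemmas -/

private lemma cdf_diff_le (ρ : Measure ℝ) [IsFiniteMeasure ρ] {s t : ℝ} (hst : s ≤ t) :
    (ρ (Ioc 0 t)).toReal - (ρ (Ioc 0 s)).toReal ≤ (ρ (Ioc s t)).toReal ∧
    (ρ (Ioc 0 s)).toReal ≤ (ρ (Ioc 0 t)).toReal := by
  constructor
  · have h1 : ρ (Ioc 0 t) ≤ ρ (Ioc 0 s) + ρ (Ioc s t) := by
      refine le_trans (measure_mono ?_) (measure_union_le _ _)
      intro x hx
      rcases le_or_gt x s with h | h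
      · exact Or.inl ⟨hx.1, h⟩
      · exact Or.inr ⟨h, hx.2⟩
    have h2 := ENNReal.toReal_mono (by
      exact (ENNReal.add_ne_top).2 ⟨measure_ne_top _ _, measure_ne_top _ _⟩) h1
    rw [ENNReal.toReal_add (measure_ne_top _ _) (measure_ne_top _ _)] at h2
    linarith
  · exact ENNReal.toReal_mono (measure_ne_top _ _)
      (measure_mono (Ioc_subset_Ioc_right hst))

private lemma continuous_cdf (ρ : Measure ℝ) [IsFiniteMeasure ρ]
    (hatom : ∀ a : ℝ, ρ {a} = 0) :
    Continuous fun t : ℝ => (ρ (Ioc 0 t)).toReal := by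
  rw [Metric.continuous_iff]
  intro a ε hε
  set s : ℕ → Set ℝ := fun n => Ioc (a - 1/(n+1)) (a + 1/(n+1)) with hs
  have hinter : ⋂ n, s n = {a} := by
    ext x
    simp only [hs, mem_iInter, mem_Ioc, mem_singleton_iff]
    constructor
    · intro h
      have hle : x ≤ a := by
        by_contra hlt
        push_neg at hlt
        obtain ⟨n, hn⟩ := exists_nat_one_div_lt (sub_pos.mpr hlt)
        have := (h n).2
        linarith
      have hge : a ≤ x := by
        by_contra hlt
        push_neg at hlt
        obtain ⟨n, hn⟩ := exists_nat_one_div_lt (sub_pos.mpr hlt)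
        have := (h n).1
        linarith
      linarith
    · rintro rfl n
      have h0 : (0:ℝ) < 1/(n+1) := by positivity
      constructor <;> linarith
  have htn : Tendsto (⇑ρ ∘ s) atTop (𝓝 (ρ {a})) := by
    rw [← hinter]
    refine tendsto_measure_iInter_atTop (fun n => measurableSet_Ioc.nullMeasurableSet)
      (fun n m hnm => ?_) ⟨0, measure_ne_top _ _⟩
    have h1 : (1:ℝ)/(m+1) ≤ 1/(n+1) := by
      apply one_div_le_one_div_of_le (by positivity)
      have : (n:ℝ) ≤ m := Nat.cast_le.mpr hnm
      linarith
    exact Ioc_subset_Ioc (by linarith) (by linarith)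
  rw [hatom a] at htn
  have hev : ∀ᶠ n in atTop, ρ (s n) < ENNReal.ofReal ε :=
    htn.eventually_lt_const (by simpa using ENNReal.ofReal_pos.mpr hε)
  obtain ⟨n, hn⟩ := hev.exists
  refine ⟨1/(n+1), by positivity, fun t ht => ?_⟩
  rw [Real.dist_eq] at ht ⊢
  have habs : |t - a| < 1/(n+1) := ht
  have hsub : ∀ u v : ℝ, u ≤ v → a - 1/(n+1) < u → v < a + 1/(n+1) →
      |(ρ (Ioc 0 v)).toReal - (ρ (Ioc 0 u)).toReal| < ε := by
    intro u v huv hu hv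
    obtain ⟨hd, hm⟩ := cdf_diff_le ρ huv
    have h1 : ρ (Ioc u v) ≤ ρ (s n) :=
      measure_mono (Ioc_subset_Ioc hu.le hv.le)
    have h2 : (ρ (Ioc u v)).toReal < ε :=
      ENNReal.toReal_lt_of_lt_ofReal (lt_of_le_of_lt h1 hn)
    rw [abs_of_nonneg (by linarith)]
    linarith
  have hδ : (0:ℝ) < 1/(n+1) := by positivity
  obtain ⟨hl1, hl2⟩ := abs_lt.mp habs
  rcases le_total t a with h | h
  · rw [abs_sub_comm]
    exact hsub t a h (by linarith) (by linarith)
  · exact hsub a t h (by linarith) (by linarith)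

/-- Pushforward of a measure by its (normalized) cumulative distribution function
is Lebesgue measure. -/
private lemma map_cdf (ρ : Measure ℝ) (F : ℝ → ℝ) (b : ℝ) (hb : 0 ≤ b)
    (hF : ∀ s t : ℝ, 0 ≤ s → s ≤ t → t ≤ b → ρ (Ioc s t) = ENNReal.ofReal (F t - F s))
    (hF0 : F 0 = 0)
    (hmono : StrictMonoOn F (Icc 0 b))
    (hsurj : ∀ t : ℝ, 0 < t → t < F b → ∃ x, x ∈ Icc 0 b ∧ F x = t)
    (hmeasF : AEMeasurable F (ρ.restrict (Ioc 0 b))) :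
    (ρ.restrict (Ioc 0 b)).map F = volume.restrict (Ioc 0 (F b)) := by
  have hFb0 : 0 ≤ F b := by
    rcases eq_or_lt_of_le hb with h | h
    · rw [← h, hF0]
    · have := hmono.monotoneOn (left_mem_Icc.mpr hb) (right_mem_Icc.mpr hb) hb
      rwa [hF0] at this
  have hfin : ρ (Ioc 0 b) ≠ ∞ := by
    rw [hF 0 b le_rfl hb le_rfl]; exact ENNReal.ofReal_ne_top
  haveI : IsFiniteMeasure (ρ.restrict (Ioc 0 b)) :=
    ⟨by rw [Measure.restrict_apply_univ]; exact hfin.lt_top⟩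
  haveI : IsFiniteMeasure ((ρ.restrict (Ioc 0 b)).map F) := by
    constructor
    rw [Measure.map_apply_of_aemeasurable hmeasF MeasurableSet.univ, preimage_univ,
      Measure.restrict_apply_univ]
    exact hfin.lt_top
  refine Measure.ext_of_Iic _ _ (fun a => ?_)
  rw [Measure.map_apply_of_aemeasurable hmeasF measurableSet_Iic,
    Measure.restrict_apply' measurableSet_Ioc, Measure.restrict_apply' measurableSet_Ioc]
  rcases le_or_gt a 0 with ha | ha
  · have h1 : F ⁻¹' Iic a ∩ Ioc 0 b = ∅ := by
      ext x
      simp only [mem_inter_iff, mem_preimage, mem_Iic, mem_Ioc, mem_empty_iff_false, iff_false]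
      rintro ⟨hFx, hx1, hx2⟩
      have : F 0 < F x := hmono (left_mem_Icc.mpr hb) ⟨hx1.le, hx2⟩ hx1
      rw [hF0] at this
      linarith
    have h2 : Iic a ∩ Ioc 0 (F b) = ∅ := by
      ext x
      simp only [mem_inter_iff, mem_Iic, mem_Ioc, mem_empty_iff_false, iff_false]
      rintro ⟨hx1, hx2, _⟩
      linarith
    rw [h1, h2]
    simp
  · rcases le_or_gt (F b) a with hab | hab
    · have h1 : F ⁻¹' Iic a ∩ Ioc 0 b = Ioc 0 b := by
        apply inter_eq_self_of_subset_right
        intro x hx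
        have : F x ≤ F b := hmono.monotoneOn ⟨hx.1.le, hx.2⟩ (right_mem_Icc.mpr hb) hx.2
        simp only [mem_preimage, mem_Iic]
        linarith
      have h2 : Iic a ∩ Ioc 0 (F b) = Ioc 0 (F b) := by
        apply inter_eq_self_of_subset_right
        intro x hx
        simp only [mem_Iic]
        exact hx.2.trans hab
      rw [h1, h2, hF 0 b le_rfl hb le_rfl, hF0, sub_zero, Real.volume_Ioc, sub_zero]
    · obtain ⟨x₀, hx₀, hFx₀⟩ := hsurj a ha hab
      have hx₀pos : 0 < x₀ := by
        rcases eq_or_lt_of_le hx₀.1 with h | h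
        · exfalso; rw [← h, hF0] at hFx₀; linarith
        · exact h
      have h1 : F ⁻¹' Iic a ∩ Ioc 0 b = Ioc 0 x₀ := by
        ext x
        simp only [mem_inter_iff, mem_preimage, mem_Iic, mem_Ioc]
        constructor
        · rintro ⟨hFx, hx1, hx2⟩
          refine ⟨hx1, ?_⟩
          by_contra hc
          push_neg at hc
          have : F x₀ < F x := hmono ⟨hx₀.1, hx₀.2⟩ ⟨hx1.le, hx2⟩ hc
          rw [hFx₀] at this
          linarith
        · rintro ⟨hx1, hx2⟩
          have hxb : x ≤ b := hx2.trans hx₀.2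
          have : F x ≤ F x₀ := hmono.monotoneOn ⟨hx1.le, hxb⟩ hx₀ hx2
          exact ⟨by linarith, hx1, hxb⟩
      have h2 : Iic a ∩ Ioc 0 (F b) = Ioc 0 a := by
        ext x
        simp only [mem_inter_iff, mem_Iic, mem_Ioc]
        constructor
        · rintro ⟨h1', h2', _⟩; exact ⟨h2', h1'⟩
        · rintro ⟨h1', h2'⟩; exact ⟨h2', h1', by linarith⟩
      rw [h1, h2, hF 0 x₀ le_rfl hx₀pos.le hx₀.2, hF0, sub_zero, hFx₀, Real.volume_Ioc, sub_zero]

/-- With `φ_μ` the inverse of `ψ_μ(x) = ∫₀^x (s/μ̄(s)) μ(ds)` and `ν̄_μ(l) =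
exp(-∫₀^l dm/φ_μ(m))`, one has `ν̄_μ(l) = 2 μ̄(φ_μ(l))` for all `l ≥ 0`. -/
theorem nu_bar_eq_two_mu_bar
    (μ : Measure ℝ) [IsProbabilityMeasure μ]
    (hsym : μ.map (fun x => -x) = μ)
    (f : ℝ → ℝ≥0∞) (hfpos : ∀ x, 0 < f x) (hμf : μ = volume.withDensity f)
    (hcent : ∫ x, x ∂μ = 0)
    (hmom : Integrable (fun x => |x|) μ)
    (φ : ℝ → ℝ)
    (hinv1 : ∀ x ≥ (0:ℝ),
      φ (∫ s in Ioc (0:ℝ) x, s / (μ (Ici s)).toReal ∂μ) = x)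
    (hinv2 : ∀ u ≥ (0:ℝ),
      ∫ s in Ioc (0:ℝ) (φ u), s / (μ (Ici s)).toReal ∂μ = u) :
    ∀ l ≥ (0:ℝ),
      Real.exp (-∫ m in (0:ℝ)..l, 1 / φ m) = 2 * (μ (Ici (φ l))).toReal := by
  intro l hl
  -- measurability of the weight function
  have hM_anti : Antitone fun x : ℝ => (μ (Ici x)).toReal := fun x y hxy =>
    ENNReal.toReal_mono (measure_ne_top μ _) (measure_mono (Ici_subset_Ici.mpr hxy))
  have hg_meas : Measurable fun s : ℝ => s / (μ (Ici s)).toReal :=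
    measurable_id.div hM_anti.measurable
  have hatom : ∀ a : ℝ, μ {a} = 0 := by
    intro a
    rw [hμf, withDensity_apply _ (measurableSet_singleton a),
      Measure.restrict_eq_zero.mpr (Real.volume_singleton), lintegral_zero_measure]
  haveI : NoAtoms μ := ⟨hatom⟩
  have hψ_empty : ∀ x : ℝ, x ≤ 0 → (∫ s in Ioc (0:ℝ) x, s / (μ (Ici s)).toReal ∂μ) = 0 := by
    intro x hx
    rw [Ioc_eq_empty (by intro h; linarith), Measure.restrict_empty, integral_zero_measure]
  have hφ0 : φ 0 = 0 := by
    have h := hinv1 0 le_rfl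
    rwa [hψ_empty 0 le_rfl] at h
  -- positivity of the measure of intervals (from injectivity of ψ)
  have hIocpos : ∀ s t : ℝ, 0 ≤ s → s < t → 0 < μ (Ioc s t) := by
    intro s t hs hst
    rcases (zero_le : (0:ℝ≥0∞) ≤ μ (Ioc s t)).eq_or_lt with h | h
    · exfalso
      have hae : (Ioc (0:ℝ) t : Set ℝ) =ᵐ[μ] (Ioc (0:ℝ) s : Set ℝ) := by
        rw [ae_eq_set]
        constructor
        · refine measure_mono_null ?_ h.symm
          rintro x ⟨⟨hx1, hx2⟩, hx3⟩
          simp only [mem_Ioc, not_and, not_le] at hx3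
          exact ⟨hx3 hx1, hx2⟩
        · refine measure_mono_null ?_ (measure_empty (μ := μ))
          rintro x ⟨⟨hx1, hx2⟩, hx3⟩
          simp only [mem_Ioc, not_and, not_le] at hx3
          exact absurd (hx3 hx1) (not_lt.mpr (hx2.trans hst.le))
      have heq : (∫ x in Ioc (0:ℝ) t, x / (μ (Ici x)).toReal ∂μ)
          = ∫ x in Ioc (0:ℝ) s, x / (μ (Ici x)).toReal ∂μ := by
        rw [Measure.restrict_congr_set hae]
      have h1 := hinv1 t (hs.trans hst.le)
      have h2 := hinv1 s hs
      rw [heq, h2] at h1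
      exact hst.ne h1
    · exact h
  have hMpos : ∀ x : ℝ, 0 ≤ x → 0 < (μ (Ici x)).toReal := by
    intro x hx
    refine ENNReal.toReal_pos (ne_of_gt ?_) (measure_ne_top μ _)
    exact lt_of_lt_of_le (hIocpos x (x+1) hx (by linarith))
      (measure_mono fun y hy => le_of_lt hy.1)
  have hM_anti' : ∀ s t : ℝ, s ≤ t → (μ (Ici t)).toReal ≤ (μ (Ici s)).toReal :=
    fun s t hst => hM_anti hst
  -- integrability
  have hg_int : ∀ t : ℝ, 0 ≤ t →
      IntegrableOn (fun s : ℝ => s / (μ (Ici s)).toReal) (Ioc 0 t) μ := by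
    intro t ht
    refine Integrable.mono' (integrable_const (t / (μ (Ici t)).toReal))
      hg_meas.aestronglyMeasurable ?_
    rw [ae_restrict_iff' measurableSet_Ioc]
    refine ae_of_all _ fun x hx => ?_
    have hx0 : 0 < x := hx.1
    have hMt := hMpos t ht
    rw [Real.norm_eq_abs, abs_of_nonneg (div_nonneg hx0.le ENNReal.toReal_nonneg)]
    exact div_le_div₀ ht hx.2 hMt (hM_anti' x t hx.2)
  have hg_int' : ∀ s t : ℝ, 0 ≤ s →
      IntegrableOn (fun x : ℝ => x / (μ (Ici x)).toReal) (Ioc s t) μ := by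
    intro s t hs
    rcases le_total t s with h | h
    · rw [Ioc_eq_empty (not_lt.mpr h)]; exact integrableOn_empty
    · exact (hg_int t (hs.trans h)).mono_set (Ioc_subset_Ioc_left hs)
  -- additivity and monotonicity of ψ
  have hψ_add : ∀ s t : ℝ, 0 ≤ s → s ≤ t →
      (∫ x in Ioc (0:ℝ) t, x / (μ (Ici x)).toReal ∂μ)
        = (∫ x in Ioc (0:ℝ) s, x / (μ (Ici x)).toReal ∂μ)
          + ∫ x in Ioc s t, x / (μ (Ici x)).toReal ∂μ := by
    intro s t hs hst
    rw [← setIntegral_union (Ioc_disjoint_Ioc_of_le le_rfl) measurableSet_Ioc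
      (hg_int s hs) (hg_int' s t hs), Ioc_union_Ioc_eq_Ioc hs hst]
  have hψ_nonneg : ∀ s t : ℝ, 0 ≤ s →
      0 ≤ ∫ x in Ioc s t, x / (μ (Ici x)).toReal ∂μ := by
    intro s t hs
    exact setIntegral_nonneg measurableSet_Ioc fun x hx =>
      div_nonneg (hs.trans hx.1.le) ENNReal.toReal_nonneg
  have hψ_mono : ∀ s t : ℝ, s ≤ t →
      (∫ x in Ioc (0:ℝ) s, x / (μ (Ici x)).toReal ∂μ)
        ≤ ∫ x in Ioc (0:ℝ) t, x / (μ (Ici x)).toReal ∂μ := by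
    intro s t hst
    rcases le_total t 0 with h | h
    · rw [hψ_empty s (hst.trans h), hψ_empty t h]
    · rcases le_total s 0 with h' | h'
      · rw [hψ_empty s h']
        exact hψ_nonneg 0 t le_rfl
      · have h1 := hψ_add s t h' hst
        have h2 := hψ_nonneg s t h'
        linarith
  have hψ_meas : Measurable fun x : ℝ => ∫ s in Ioc (0:ℝ) x, s / (μ (Ici s)).toReal ∂μ :=
    Monotone.measurable fun s t hst => hψ_mono s t hst
  -- φ facts
  have hφnn : ∀ u : ℝ, 0 ≤ u → 0 ≤ φ u := by
    intro u hu
    by_contra hc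
    push_neg at hc
    have h := hinv2 u hu
    rw [hψ_empty (φ u) hc.le] at h
    rw [← h, hφ0] at hc
    exact lt_irrefl _ hc
  have hφmono : MonotoneOn φ (Ici (0:ℝ)) := by
    intro u hu v hv huv
    by_contra hc
    push_neg at hc
    have h1 := hψ_mono (φ v) (φ u) hc.le
    rw [hinv2 u hu, hinv2 v hv] at h1
    have : u = v := le_antisymm huv h1
    rw [this] at hc
    exact lt_irrefl _ hc
  set b := φ l with hbdef
  have hb : 0 ≤ b := hφnn l hl
  have hψb : (∫ s in Ioc (0:ℝ) b, s / (μ (Ici s)).toReal ∂μ) = l := hinv2 l hl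
  have hψ_strict : StrictMonoOn
      (fun x : ℝ => ∫ s in Ioc (0:ℝ) x, s / (μ (Ici s)).toReal ∂μ) (Icc 0 b) := by
    intro u hu v hv huv
    dsimp only
    refine lt_of_le_of_ne (hψ_mono u v huv.le) fun heq => ?_
    have h1 := hinv1 u hu.1
    have h2 := hinv1 v hv.1
    rw [heq, h2] at h1
    exact huv.ne h1.symm
  -- the weighted measure
  set ρA : Measure ℝ :=
    μ.withDensity (fun s => (((s / (μ (Ici s)).toReal).toNNReal) : ℝ≥0∞))
    with hρAdef
  have hcoe : (fun s : ℝ => (((s / (μ (Ici s)).toReal).toNNReal) : ℝ≥0∞))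
      = fun s : ℝ => ENNReal.ofReal (s / (μ (Ici s)).toReal) := rfl
  have hρA_Ioc : ∀ s t : ℝ, 0 ≤ s → s ≤ t → t ≤ b →
      ρA (Ioc s t) = ENNReal.ofReal ((∫ x in Ioc (0:ℝ) t, x / (μ (Ici x)).toReal ∂μ)
        - ∫ x in Ioc (0:ℝ) s, x / (μ (Ici x)).toReal ∂μ) := by
    intro s t hs hst _
    rw [hρAdef, withDensity_apply _ measurableSet_Ioc]
    have hnn : 0 ≤ᵐ[μ.restrict (Ioc s t)] fun x : ℝ => x / (μ (Ici x)).toReal := by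
      filter_upwards [ae_restrict_mem measurableSet_Ioc] with x hx
      exact div_nonneg (hs.trans hx.1.le) ENNReal.toReal_nonneg
    have hofr := ofReal_integral_eq_lintegral_ofReal (hg_int' s t hs) hnn
    rw [hcoe, ← hofr]
    congr 1
    have h1 := hψ_add s t hs hst
    linarith
  have hmapA : (ρA.restrict (Ioc 0 b)).map
      (fun x : ℝ => ∫ s in Ioc (0:ℝ) x, s / (μ (Ici s)).toReal ∂μ)
      = volume.restrict (Ioc 0 l) := by
    have hres := map_cdf ρA
      (fun x : ℝ => ∫ s in Ioc (0:ℝ) x, s / (μ (Ici s)).toReal ∂μ) b hb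
      (fun s t hs hst htb => hρA_Ioc s t hs hst htb)
      (hψ_empty 0 le_rfl) hψ_strict
      (fun t ht htb => by
        have htb' : t < l := by simpa [hψb] using htb
        exact ⟨φ t, ⟨hφnn t ht.le, hφmono (mem_Ici.mpr ht.le) (mem_Ici.mpr hl) htb'.le⟩,
          hinv2 t ht.le⟩)
      hψ_meas.aemeasurable
    simpa only [hψb] using hres
  have hφ_aesm : AEStronglyMeasurable (fun m : ℝ => 1 / φ m)
      (volume.restrict (Ioc 0 l)) := by
    have h1 : AEMeasurable φ (volume.restrict (Ioc (0:ℝ) l)) :=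
      aemeasurable_restrict_of_monotoneOn measurableSet_Ioc
        (hφmono.mono fun x hx => hx.1.le)
    exact (aemeasurable_const.div h1).aestronglyMeasurable
  -- step A : substitute m = ψ x
  have stepA : (∫ m in Ioc (0:ℝ) l, 1 / φ m)
      = ∫ x in Ioc (0:ℝ) b, 1 / (μ (Ici x)).toReal ∂μ := by
    have h1 : (∫ m in Ioc (0:ℝ) l, 1 / φ m)
        = ∫ x in Ioc (0:ℝ) b,
            1 / φ (∫ s in Ioc (0:ℝ) x, s / (μ (Ici s)).toReal ∂μ) ∂ρA := by
      rw [← hmapA, integral_map hψ_meas.aemeasurable (hmapA ▸ hφ_aesm)]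
    have h2 : (∫ x in Ioc (0:ℝ) b,
          1 / φ (∫ s in Ioc (0:ℝ) x, s / (μ (Ici s)).toReal ∂μ) ∂ρA)
        = ∫ x in Ioc (0:ℝ) b, 1 / x ∂ρA := by
      refine setIntegral_congr_fun measurableSet_Ioc fun x hx => ?_
      rw [hinv1 x hx.1.le]
    have h3 : (∫ x in Ioc (0:ℝ) b, 1 / x ∂ρA)
        = ∫ x in Ioc (0:ℝ) b,
            (x / (μ (Ici x)).toReal).toNNReal • (1 / x) ∂μ := by
      rw [hρAdef, restrict_withDensity measurableSet_Ioc,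
        integral_withDensity_eq_integral_smul (hg_meas.real_toNNReal) _]
    have h4 : (∫ x in Ioc (0:ℝ) b,
          (x / (μ (Ici x)).toReal).toNNReal • (1 / x) ∂μ)
        = ∫ x in Ioc (0:ℝ) b, 1 / (μ (Ici x)).toReal ∂μ := by
      refine setIntegral_congr_fun measurableSet_Ioc fun x hx => ?_
      have hx0 : 0 < x := hx.1
      have hMx : 0 < (μ (Ici x)).toReal := hMpos x hx0.le
      rw [NNReal.smul_def, Real.coe_toNNReal _ (div_nonneg hx0.le ENNReal.toReal_nonneg)]
      field_simp
      rw [smul_eq_mul]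
      field_simp [hx0.ne', hMx.ne']
    rw [h1, h2, h3, h4]
  -- step B : substitute m = μ(Ioc 0 x)
  have hFb_cont : Continuous fun t : ℝ => (μ (Ioc 0 t)).toReal := continuous_cdf μ hatom
  have hμIoc_add : ∀ s t : ℝ, 0 ≤ s → s ≤ t →
      μ (Ioc 0 t) = μ (Ioc 0 s) + μ (Ioc s t) := by
    intro s t hs hst
    rw [← Ioc_union_Ioc_eq_Ioc hs hst, measure_union (Ioc_disjoint_Ioc_of_le le_rfl) measurableSet_Ioc]
  have hFb_Ioc : ∀ s t : ℝ, 0 ≤ s → s ≤ t → t ≤ b →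
      μ (Ioc s t) = ENNReal.ofReal ((μ (Ioc 0 t)).toReal - (μ (Ioc 0 s)).toReal) := by
    intro s t hs hst _
    rw [hμIoc_add s t hs hst, ENNReal.toReal_add (measure_ne_top _ _) (measure_ne_top _ _),
      add_sub_cancel_left, ENNReal.ofReal_toReal (measure_ne_top _ _)]
  have hFb_strict : StrictMonoOn (fun x : ℝ => (μ (Ioc 0 x)).toReal) (Icc 0 b) := by
    intro u hu v hv huv
    dsimp only
    rw [hμIoc_add u v hu.1 huv.le,
      ENNReal.toReal_add (measure_ne_top _ _) (measure_ne_top _ _)]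
    have hpos : 0 < (μ (Ioc u v)).toReal :=
      ENNReal.toReal_pos (hIocpos u v hu.1 huv).ne' (measure_ne_top _ _)
    linarith
  have hFb0 : (μ (Ioc (0:ℝ) 0)).toReal = 0 := by
    rw [Ioc_self, measure_empty, ENNReal.toReal_zero]
  have hmapB : (μ.restrict (Ioc 0 b)).map (fun x : ℝ => (μ (Ioc 0 x)).toReal)
      = volume.restrict (Ioc 0 ((μ (Ioc (0:ℝ) b)).toReal)) :=
    map_cdf μ _ b hb hFb_Ioc hFb0 hFb_strict
      (fun t ht htb => by
        have hiv := intermediate_value_Icc hb hFb_cont.continuousOn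
        have hmem : t ∈ Icc ((μ (Ioc (0:ℝ) 0)).toReal) ((μ (Ioc (0:ℝ) b)).toReal) := by
          rw [hFb0]; exact ⟨ht.le, htb.le⟩
        obtain ⟨x, hx, hxt⟩ := hiv hmem
        exact ⟨x, hx, hxt⟩)
      hFb_cont.measurable.aemeasurable
  have hM_eq : ∀ x : ℝ, 0 ≤ x →
      (μ (Ici x)).toReal = (μ (Ici (0:ℝ))).toReal - (μ (Ioc 0 x)).toReal := by
    intro x hx
    have h1 : μ (Ici (0:ℝ)) = μ (Ioi (0:ℝ)) := (measure_congr (Ioi_ae_eq_Ici' (hatom 0))).symm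
    have h2 : μ (Ici x) = μ (Ioi x) := (measure_congr (Ioi_ae_eq_Ici' (hatom x))).symm
    have h3 : μ (Ioi (0:ℝ)) = μ (Ioc 0 x) + μ (Ioi x) := by
      rw [← Ioc_union_Ioi_eq_Ioi hx, measure_union Ioc_disjoint_Ioi_same measurableSet_Ioi]
    rw [h1, h2, h3, ENNReal.toReal_add (measure_ne_top _ _) (measure_ne_top _ _)]
    ring
  have hsmB : AEStronglyMeasurable (fun m : ℝ => 1 / ((μ (Ici (0:ℝ))).toReal - m))
      (volume.restrict (Ioc 0 ((μ (Ioc (0:ℝ) b)).toReal))) :=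
    (measurable_const.div (measurable_const.sub measurable_id)).aestronglyMeasurable
  have stepB : (∫ x in Ioc (0:ℝ) b, 1 / (μ (Ici x)).toReal ∂μ)
      = ∫ m in Ioc (0:ℝ) ((μ (Ioc (0:ℝ) b)).toReal),
          1 / ((μ (Ici (0:ℝ))).toReal - m) := by
    have h1 : (∫ x in Ioc (0:ℝ) b, 1 / (μ (Ici x)).toReal ∂μ)
        = ∫ x in Ioc (0:ℝ) b,
            1 / ((μ (Ici (0:ℝ))).toReal - (μ (Ioc 0 x)).toReal) ∂μ :=
      setIntegral_congr_fun measurableSet_Ioc fun x hx => by rw [hM_eq x hx.1.le]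
    rw [h1, ← hmapB, integral_map hFb_cont.measurable.aemeasurable (hmapB ▸ hsmB)]
  -- log computation
  have hM0pos : 0 < (μ (Ici (0:ℝ))).toReal := hMpos 0 le_rfl
  have hMb_pos : 0 < (μ (Ici b)).toReal := hMpos b hb
  have hFbb : (μ (Ioc (0:ℝ) b)).toReal
      = (μ (Ici (0:ℝ))).toReal - (μ (Ici b)).toReal := by
    have h := hM_eq b hb; linarith
  have hc_nonneg : (0:ℝ) ≤ (μ (Ioc (0:ℝ) b)).toReal := ENNReal.toReal_nonneg
  have hlog : (∫ m in Ioc (0:ℝ) ((μ (Ioc (0:ℝ) b)).toReal),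
        1 / ((μ (Ici (0:ℝ))).toReal - m))
      = Real.log ((μ (Ici (0:ℝ))).toReal / (μ (Ici b)).toReal) := by
    rw [← intervalIntegral.integral_of_le hc_nonneg,
      intervalIntegral.integral_comp_sub_left (fun u => 1/u) ((μ (Ici (0:ℝ))).toReal)]
    have h0 : (μ (Ici (0:ℝ))).toReal - (μ (Ioc (0:ℝ) b)).toReal = (μ (Ici b)).toReal := by
      linarith
    rw [h0, sub_zero, integral_one_div (notMem_uIcc_of_lt hMb_pos hM0pos)]
  -- M 0 = 1/2 by symmetry
  have hM0 : (μ (Ici (0:ℝ))).toReal = 1/2 := by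
    have hmapneg : μ (Iic (0:ℝ)) = μ (Ici (0:ℝ)) := by
      conv_lhs => rw [← hsym]
      rw [Measure.map_apply measurable_neg measurableSet_Iic]
      congr 1
      ext x
      simp [neg_nonpos]
    have hui : μ (Iic (0:ℝ) ∪ Ici (0:ℝ)) + μ (Iic (0:ℝ) ∩ Ici (0:ℝ))
        = μ (Iic (0:ℝ)) + μ (Ici (0:ℝ)) :=
      measure_union_add_inter _ measurableSet_Ici
    rw [Iic_union_Ici, Iic_inter_Ici, Icc_self, measure_univ, hatom 0, hmapneg, add_zero]
      at hui
    have h := congrArg ENNReal.toReal hui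
    rw [ENNReal.toReal_add (measure_ne_top _ _) (measure_ne_top _ _), ENNReal.toReal_one]
      at h
    linarith
  have hint : (∫ m in (0:ℝ)..l, 1 / φ m)
      = Real.log ((μ (Ici (0:ℝ))).toReal / (μ (Ici b)).toReal) := by
    rw [intervalIntegral.integral_of_le hl, stepA, stepB, hlog]
  rw [hint, Real.exp_neg, Real.exp_log (div_pos hM0pos hMb_pos), hM0, inv_div]
  ring
end

section
/- Let φ₊ : [0,∞) → (0,∞) be increasing and φ₋ : [0,∞) → (−∞,0) be decreasing, with Δ(l) = ∫₀^l (1/(2φ₊(m)) + 1/(2|φ₋(m)|)) dm finite for each l > 0 and Δ(l) → ∞ as l → ∞. Let ν̄(l) = exp(−Δ(l)), F convex increasing with bounded derivative, Σ(l) = (1/ν̄(l)) ∫_l^∞ F'(m) ν(dm), δ(l) = Σ(l) − F'(l) (defined a.e.), A₊(l) = Σ(0) + ∫₀^l δ(m)/φ₊(m) dm, A₋(l) = −Σ(0) − ∫₀^l δ(m)/|φ₋(m)| dm. Then A₊(l) − A₋(l) = 2Σ(l) for all l ≥ 0. -/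
open MeasureTheory Set Filter

/-- Under Assumption (A2), the functions `A₊`, `A₋` built from `Sigma` and `δ` satisfy
`A₊(l) - A₋(l) = 2 Sigma(l)` for all `l ≥ 0` (key step of Lemma 2.5). -/
theorem Aplus_minus_Aminus_eq_two_Sigma
    (φp φm F F' Sg δ Ap Am : ℝ → ℝ) (K : ℝ)
    (hφpmono : MonotoneOn φp (Ici 0)) (hφppos : ∀ l ≥ (0:ℝ), 0 < φp l)
    (hφmanti : AntitoneOn φm (Ici 0)) (hφmneg : ∀ l ≥ (0:ℝ), φm l < 0)
    (hΔfin : ∀ l > (0:ℝ), IntervalIntegrable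
      (fun m => 1 / (2 * φp m) + 1 / (2 * |φm m|)) volume 0 l)
    (hΔinf : Tendsto
      (fun l => ∫ m in (0:ℝ)..l, (1 / (2 * φp m) + 1 / (2 * |φm m|))) atTop atTop)
    -- F convex increasing with bounded derivative
    (hF : ConvexOn ℝ (Ici 0) F) (hFmono : MonotoneOn F (Ici 0))
    (hF' : ∀ x ≥ (0:ℝ), HasDerivAt F (F' x) x)
    (hFK : ∀ x ≥ (0:ℝ), 0 ≤ F' x ∧ F' x ≤ K)
    -- Sigma(l) = (1/ν̄(l)) ∫_l^∞ F'(m) ν(dm), where ν has tail ν̄(l) = exp(-Δ(l))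
    (hSigma : ∀ l, Sg l =
      (1 / Real.exp (-∫ m in (0:ℝ)..l, (1 / (2 * φp m) + 1 / (2 * |φm m|)))) *
        ∫ m in Ioi l, F' m *
          (Real.exp (-∫ u in (0:ℝ)..m, (1 / (2 * φp u) + 1 / (2 * |φm u|))) *
            (1 / (2 * φp m) + 1 / (2 * |φm m|))))
    (hδ : ∀ l, δ l = Sg l - F' l)
    (hAp : ∀ l, Ap l = Sg 0 + ∫ m in (0:ℝ)..l, δ m / φp m)
    (hAm : ∀ l, Am l = -Sg 0 - ∫ m in (0:ℝ)..l, δ m / |φm m|) :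
    ∀ l ≥ (0:ℝ), Ap l - Am l = 2 * Sg l := by
  -- abbreviations
  set D : ℝ → ℝ := fun m => 1 / (2 * φp m) + 1 / (2 * |φm m|) with hDdef
  set Δ : ℝ → ℝ := fun x => ∫ m in (0:ℝ)..x, D m with hΔdef
  set E : ℝ → ℝ := fun x => Real.exp (-Δ x) with hEdef
  set g : ℝ → ℝ := fun m => F' m * (E m * D m) with hgdef
  set G : ℝ → ℝ := fun x => ∫ m in Ioi x, g m with hGdef
  have hK0 : (0:ℝ) ≤ K := le_trans (hFK 0 le_rfl).1 (hFK 0 le_rfl).2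
  -- positivity and monotonicity of D
  have hDpos : ∀ m ≥ (0:ℝ), 0 < D m := by
    intro m hm
    have h1 : 0 < φp m := hφppos m hm
    have h2 : 0 < |φm m| := abs_pos.2 (hφmneg m hm).ne
    positivity
  have hDanti : AntitoneOn D (Ici 0) := by
    intro a ha b hb hab
    have h1 : 0 < φp a := hφppos a ha
    have h2 : 0 < |φm a| := abs_pos.2 (hφmneg a ha).ne
    have h3 : φp a ≤ φp b := hφpmono ha hb hab
    have h4 : |φm a| ≤ |φm b| := by
      rw [abs_of_neg (hφmneg a ha), abs_of_neg (hφmneg b hb)]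
      exact neg_le_neg (hφmanti ha hb hab)
    have := one_div_le_one_div_of_le (by linarith) (by linarith : 2 * φp a ≤ 2 * φp b)
    have := one_div_le_one_div_of_le (by linarith) (by linarith : 2 * |φm a| ≤ 2 * |φm b|)
    simp only [hDdef]
    linarith
  -- measurable global extensions
  set Dt : ℝ → ℝ := fun m => D (max m 0) with hDtdef
  have hDtanti : Antitone Dt := fun a b hab =>
    hDanti (mem_Ici.2 (le_max_right _ _)) (mem_Ici.2 (le_max_right _ _)) (max_le_max hab le_rfl)
  have hDtmeas : Measurable Dt := hDtanti.measurable
  have hDteq : ∀ m > (0:ℝ), Dt m = D m := fun m hm => by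
    simp [hDtdef, max_eq_left hm.le]
  have hDmeas : AEStronglyMeasurable D (volume.restrict (Ioi (0:ℝ))) := by
    refine hDtmeas.aestronglyMeasurable.congr ?_
    filter_upwards [ae_restrict_mem measurableSet_Ioi] with m hm
    exact hDteq m hm
  -- F' is monotone on Ici 0
  have hF'mono : MonotoneOn F' (Ici 0) := by
    have h := hF.monotoneOn_deriv (fun x hx => (hF' x hx).differentiableAt)
    intro a ha b hb hab
    have := h ha hb hab
    rwa [(hF' a ha).deriv, (hF' b hb).deriv] at this
  set Ft : ℝ → ℝ := fun m => F' (max m 0) with hFtdef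
  have hFtmono : Monotone Ft := fun a b hab =>
    hF'mono (mem_Ici.2 (le_max_right _ _)) (mem_Ici.2 (le_max_right _ _)) (max_le_max hab le_rfl)
  have hFtmeas : Measurable Ft := hFtmono.measurable
  have hFteq : ∀ m > (0:ℝ), Ft m = F' m := fun m hm => by
    simp [hFtdef, max_eq_left hm.le]
  have hF'meas : AEStronglyMeasurable F' (volume.restrict (Ioi (0:ℝ))) := by
    refine hFtmeas.aestronglyMeasurable.congr ?_
    filter_upwards [ae_restrict_mem measurableSet_Ioi] with m hm
    exact hFteq m hm
  -- the countable bad set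
  set S : Set ℝ := {x | ¬ContinuousAt Dt x} ∪ {x | ¬ContinuousAt Ft x} with hSdef
  have hScount : S.Countable :=
    (hDtanti.countable_not_continuousAt).union (hFtmono.countable_not_continuousAt)
  have hDcont : ∀ x, 0 < x → x ∉ S → ContinuousAt D x := by
    intro x hx hxS
    have h1 : ContinuousAt Dt x := by
      by_contra h; exact hxS (Or.inl h)
    refine h1.congr ?_
    filter_upwards [Ioi_mem_nhds hx] with y hy
    exact hDteq y hy
  have hF'cont : ∀ x, 0 < x → x ∉ S → ContinuousAt F' x := by
    intro x hx hxS
    have h1 : ContinuousAt Ft x := by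
      by_contra h; exact hxS (Or.inr h)
    refine h1.congr ?_
    filter_upwards [Ioi_mem_nhds hx] with y hy
    exact hFteq y hy
  -- interval integrability of D
  have hDint : ∀ x ≥ (0:ℝ), IntervalIntegrable D volume 0 x := by
    intro x hx
    rcases eq_or_lt_of_le hx with h | h
    · simp [← h]
    · exact hΔfin x h
  -- Δ nonneg, Δ 0 = 0, E ≤ 1, E > 0
  have hΔ0 : Δ 0 = 0 := by simp [hΔdef]
  have hΔnn : ∀ x ≥ (0:ℝ), 0 ≤ Δ x := by
    intro x hx
    exact intervalIntegral.integral_nonneg hx (fun u hu => (hDpos u hu.1).le)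
  have hEpos : ∀ x, 0 < E x := fun x => Real.exp_pos _
  have hEle : ∀ x ≥ (0:ℝ), E x ≤ 1 := by
    intro x hx
    have : -Δ x ≤ 0 := neg_nonpos.2 (hΔnn x hx)
    calc E x = Real.exp (-Δ x) := rfl
      _ ≤ Real.exp 0 := Real.exp_le_exp.2 this
      _ = 1 := Real.exp_zero
  have hE0 : E 0 = 1 := by simp [hEdef, hΔ0]
  -- continuity of Δ on Icc 0 B
  have hΔcont : ∀ B ≥ (0:ℝ), ContinuousOn Δ (Icc 0 B) := by
    intro B hB
    have h := intervalIntegral.continuousOn_primitive_interval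
      (μ := volume) (f := D) (a := 0) (b := B) ?_
    · rwa [uIcc_of_le hB] at h
    · rw [uIcc_of_le hB]
      exact ((hDint B hB).1).congr_set_ae Ioc_ae_eq_Icc.symm
  -- FTC-1 for Δ at good points
  have hΔderiv : ∀ x, 0 < x → x ∉ S → HasDerivAt Δ (D x) x := by
    intro x hx hxS
    exact intervalIntegral.integral_hasDerivAt_right (hDint x hx.le)
      ⟨Ioi 0, Ioi_mem_nhds hx, hDmeas⟩ (hDcont x hx hxS)
  -- E * D is interval integrable on [0, b]
  have hΔcontIci : ContinuousOn Δ (Ici (0:ℝ)) := by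
    intro x hx
    have h1 : ContinuousWithinAt Δ (Icc 0 (x + 1)) x :=
      hΔcont (x + 1) (by linarith [mem_Ici.1 hx]) x ⟨hx, by linarith⟩
    refine h1.mono_of_mem_nhdsWithin ?_
    have : Icc (0:ℝ) (x + 1) = Ici 0 ∩ Iic (x + 1) := (Ici_inter_Iic).symm
    rw [this]
    exact Filter.inter_mem self_mem_nhdsWithin
      (mem_nhdsWithin_of_mem_nhds (Iic_mem_nhds (lt_add_one x)))
  have hEcontIci : ContinuousOn E (Ici (0:ℝ)) := by
    simp only [hEdef]
    exact (Real.continuous_exp.comp continuous_neg).comp_continuousOn hΔcontIci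
  have hEmeas : AEStronglyMeasurable E (volume.restrict (Ioi (0:ℝ))) :=
    ((hEcontIci.mono Ioi_subset_Ici_self).aestronglyMeasurable measurableSet_Ioi)
  have hEDmeas : AEStronglyMeasurable (fun m => E m * D m)
      (volume.restrict (Ioi (0:ℝ))) := hEmeas.mul hDmeas
  have hEDint : ∀ b ≥ (0:ℝ), IntervalIntegrable (fun m => E m * D m) volume 0 b := by
    intro b hb
    rcases eq_or_lt_of_le hb with h | h
    · simp [← h]
    rw [intervalIntegrable_iff_integrableOn_Ioc_of_le hb]
    refine Integrable.mono' (hΔfin b h).1 (hEDmeas.mono_set Ioc_subset_Ioi_self) ?_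
    filter_upwards [ae_restrict_mem measurableSet_Ioc] with m hm
    rw [Real.norm_eq_abs,
      abs_of_nonneg (mul_nonneg (hEpos m).le (hDpos m hm.1.le).le)]
    calc E m * D m ≤ 1 * D m :=
        mul_le_mul_of_nonneg_right (hEle m hm.1.le) (hDpos m hm.1.le).le
      _ = D m := one_mul _
  -- FTC: ∫₀ᵇ E D = 1 - E b
  have hEDftc : ∀ b ≥ (0:ℝ), (∫ m in (0:ℝ)..b, E m * D m) = 1 - E b := by
    intro b hb
    have h := integral_eq_of_hasDerivAt_off_countable_of_le
      (fun x => -E x) (fun m => E m * D m) hb hScount ?_ ?_ (hEDint b hb)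
    · rw [h]
      simp only [hEdef, hΔ0, neg_zero, Real.exp_zero]
      ring
    · have hc := hΔcont b hb
      have : ContinuousOn (fun x => -E x) (Icc 0 b) := by
        simp only [hEdef]
        exact ((Real.continuous_exp.comp continuous_neg).comp_continuousOn hc).neg
      exact this
    · intro x hx
      have hx0 : 0 < x := hx.1.1
      have hd : HasDerivAt Δ (D x) x := hΔderiv x hx0 hx.2
      have h1 : HasDerivAt (fun y => Real.exp (-Δ y)) (Real.exp (-Δ x) * -D x) x :=
        (hd.neg).exp
      have h2 := h1.neg
      show HasDerivAt (fun x => -E x) (E x * D x) x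
      simp only [hEdef]
      exact h2.congr_deriv (by ring)
  -- E tends to 0 at infinity
  have hEtend : Tendsto E atTop (nhds 0) := by
    have h1 : Tendsto (fun x => -Δ x) atTop atBot := by
      exact Filter.tendsto_neg_atBot_iff.2 hΔinf
    exact Real.tendsto_exp_atBot.comp h1
  -- E*D is integrable on Ioi 0 and its tail integrals are E x
  have hEDIoi : IntegrableOn (fun m => E m * D m) (Ioi (0:ℝ)) := by
    refine integrableOn_Ioi_of_intervalIntegral_norm_bounded (b := fun i : ℝ => i)
      1 0 (fun i => ?_) tendsto_id ?_
    · rcases le_or_gt i 0 with h | h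
      · rw [Ioc_eq_empty (by simpa using h)]
        exact integrableOn_empty
      · exact (intervalIntegrable_iff_integrableOn_Ioc_of_le h.le).1 (hEDint i h.le)
    · filter_upwards [eventually_ge_atTop (0:ℝ)] with i hi
      have hcong : (∫ x in (0:ℝ)..i, ‖E x * D x‖) = ∫ x in (0:ℝ)..i, E x * D x := by
        refine intervalIntegral.integral_congr ?_
        intro x hx
        rw [uIcc_of_le hi] at hx
        exact Real.norm_of_nonneg (mul_nonneg (hEpos x).le (hDpos x hx.1).le)
      rw [hcong, hEDftc i hi]
      linarith [hEpos i]
  have hEDtail : ∀ x ≥ (0:ℝ), (∫ m in Ioi x, E m * D m) = E x := by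
    intro x hx
    have t1 := intervalIntegral_tendsto_integral_Ioi x
      (hEDIoi.mono_set (Ioi_subset_Ioi hx)) tendsto_id
    have t2 : Tendsto (fun b => E x - E b) atTop (nhds (E x)) := by
      simpa using tendsto_const_nhds.sub hEtend
    have heq : ∀ᶠ b in atTop, (∫ m in x..b, E m * D m) = E x - E b := by
      filter_upwards [eventually_ge_atTop x] with b hb
      have hxb : IntervalIntegrable (fun m => E m * D m) volume x b := by
        rw [intervalIntegrable_iff_integrableOn_Ioc_of_le hb]
        exact hEDIoi.mono_set (Ioc_subset_Ioi_self.trans (Ioi_subset_Ioi hx))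
      have hadd := intervalIntegral.integral_add_adjacent_intervals (hEDint x hx) hxb
      have h1 := hEDftc x hx
      have h2 := hEDftc b (le_trans hx hb)
      rw [h1, h2] at hadd
      linarith
    have t1' : Tendsto (fun b => E x - E b) atTop (nhds (∫ m in Ioi x, E m * D m)) := by
      refine t1.congr' ?_
      filter_upwards [heq] with b hb using hb
    exact (tendsto_nhds_unique t1' t2)
  -- g is integrable on Ioi x for x ≥ 0
  have hgnn : ∀ m > (0:ℝ), 0 ≤ g m :=
    fun m hm => mul_nonneg (hFK m hm.le).1 (mul_nonneg (hEpos m).le (hDpos m hm.le).le)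
  have hgle : ∀ m > (0:ℝ), g m ≤ K * (E m * D m) := fun m hm =>
    mul_le_mul_of_nonneg_right (hFK m hm.le).2
      (mul_nonneg (hEpos m).le (hDpos m hm.le).le)
  have hgmeas : AEStronglyMeasurable g (volume.restrict (Ioi (0:ℝ))) :=
    hF'meas.mul hEDmeas
  have hgIoi : IntegrableOn g (Ioi (0:ℝ)) := by
    refine Integrable.mono' (hEDIoi.const_mul K) hgmeas ?_
    filter_upwards [ae_restrict_mem measurableSet_Ioi] with m hm
    rw [Real.norm_eq_abs, abs_of_nonneg (hgnn m hm)]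
    exact hgle m hm
  -- split of G
  have hGsplit : ∀ x ≥ (0:ℝ), G x = G 0 - ∫ m in (0:ℝ)..x, g m := by
    intro x hx
    have hsplit : (∫ m in Ioi (0:ℝ), g m) =
        (∫ m in Ioc 0 x, g m) + ∫ m in Ioi x, g m := by
      rw [← setIntegral_union (Ioc_disjoint_Ioi le_rfl) measurableSet_Ioi
        (hgIoi.mono_set Ioc_subset_Ioi_self) (hgIoi.mono_set (Ioi_subset_Ioi hx)),
        Ioc_union_Ioi_eq_Ioi hx]
    have h2 : (∫ m in (0:ℝ)..x, g m) = ∫ m in Ioc 0 x, g m :=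
      intervalIntegral.integral_of_le hx
    simp only [hGdef]
    rw [h2]
    linarith [hsplit]
  -- Sg in terms of Δ and G
  have hSgeq : ∀ x, Sg x = Real.exp (Δ x) * G x := by
    intro x
    rw [hSigma x]
    congr 1
    rw [one_div, ← Real.exp_neg, neg_neg]
  -- bounds on Sg
  have hSgnn : ∀ x ≥ (0:ℝ), 0 ≤ Sg x := by
    intro x hx
    rw [hSgeq x]
    refine mul_nonneg (Real.exp_pos _).le ?_
    refine setIntegral_nonneg measurableSet_Ioi ?_
    intro m hm
    exact hgnn m (lt_of_le_of_lt hx hm)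
  have hSgle : ∀ x ≥ (0:ℝ), Sg x ≤ K := by
    intro x hx
    rw [hSgeq x]
    have h1 : G x ≤ K * E x := by
      have h2 : (∫ m in Ioi x, g m) ≤ ∫ m in Ioi x, K * (E m * D m) := by
        refine setIntegral_mono_on (hgIoi.mono_set (Ioi_subset_Ioi hx))
          (IntegrableOn.mono_set (hEDIoi.const_mul K) (Ioi_subset_Ioi hx))
          measurableSet_Ioi ?_
        intro m hm
        exact hgle m (lt_of_le_of_lt hx hm)
      calc G x ≤ ∫ m in Ioi x, K * (E m * D m) := h2
        _ = K * ∫ m in Ioi x, E m * D m := by rw [MeasureTheory.integral_const_mul]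
        _ = K * E x := by rw [hEDtail x hx]
    calc Real.exp (Δ x) * G x ≤ Real.exp (Δ x) * (K * E x) :=
          mul_le_mul_of_nonneg_left h1 (Real.exp_pos _).le
      _ = K * (Real.exp (Δ x) * E x) := by ring
      _ = K := by
          rw [hEdef]; simp [← Real.exp_add]
  have hδbdd : ∀ m > (0:ℝ), |δ m * D m| ≤ K * D m := by
    intro m hm
    rw [abs_mul, abs_of_pos (hDpos m hm.le)]
    refine mul_le_mul_of_nonneg_right ?_ (hDpos m hm.le).le
    rw [hδ m, abs_sub_le_iff]
    constructor
    · have := (hFK m hm.le).1; have := hSgle m hm.le; linarith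
    · have := (hFK m hm.le).2; have := hSgnn m hm.le; linarith
  -- continuity of Sg on Icc 0 B
  have hSgcont : ∀ B ≥ (0:ℝ), ContinuousOn Sg (Icc 0 B) := by
    intro B hB
    have hgIcc : IntegrableOn g (uIcc 0 B) := by
      rw [uIcc_of_le hB]
      exact (hgIoi.mono_set Ioc_subset_Ioi_self).congr_set_ae Ioc_ae_eq_Icc.symm
    have hP : ContinuousOn (fun x => ∫ m in (0:ℝ)..x, g m) (Icc 0 B) := by
      have := intervalIntegral.continuousOn_primitive_interval
        (μ := volume) (f := g) (a := 0) (b := B) hgIcc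
      rwa [uIcc_of_le hB] at this
    have hcomb : ContinuousOn
        (fun x => Real.exp (Δ x) * (G 0 - ∫ m in (0:ℝ)..x, g m)) (Icc 0 B) := by
      exact ((Real.continuous_exp.comp_continuousOn
        (hΔcont B hB))).mul (continuousOn_const.sub hP)
    refine ContinuousOn.congr hcomb ?_
    intro x hx
    rw [hSgeq x, hGsplit x hx.1]
  -- the main FTC identity
  have hSgmeasIoc : ∀ B ≥ (0:ℝ), AEStronglyMeasurable Sg (volume.restrict (Ioc 0 B)) :=
    fun B hB => ((hSgcont B hB).aestronglyMeasurable measurableSet_Icc).mono_set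
      Ioc_subset_Icc_self
  have hδDmeas : ∀ B ≥ (0:ℝ), AEStronglyMeasurable (fun m => δ m * D m)
      (volume.restrict (Ioc 0 B)) := by
    intro B hB
    have h1 : AEStronglyMeasurable δ (volume.restrict (Ioc 0 B)) := by
      have := (hSgmeasIoc B hB).sub (hF'meas.mono_set Ioc_subset_Ioi_self)
      refine this.congr ?_
      filter_upwards with m
      simp [hδ m]
    exact h1.mul (hDmeas.mono_set Ioc_subset_Ioi_self)
  have hδDint : ∀ B ≥ (0:ℝ), IntervalIntegrable (fun m => δ m * D m) volume 0 B := by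
    intro B hB
    rcases eq_or_lt_of_le hB with h | h
    · simp [← h]
    rw [intervalIntegrable_iff_integrableOn_Ioc_of_le hB]
    refine Integrable.mono' ((hΔfin B h).1.const_mul K) (hδDmeas B hB) ?_
    filter_upwards [ae_restrict_mem measurableSet_Ioc] with m hm
    exact (hδbdd m hm.1).trans le_rfl
  have hmain : ∀ l ≥ (0:ℝ), (∫ m in (0:ℝ)..l, δ m * D m) = Sg l - Sg 0 := by
    intro l hl
    refine integral_eq_of_hasDerivAt_off_countable_of_le Sg
      (fun m => δ m * D m) hl hScount (hSgcont l hl) ?_ (hδDint l hl)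
    intro x hx
    have hx0 : 0 < x := hx.1.1
    have hxS : x ∉ S := hx.2
    have hd : HasDerivAt Δ (D x) x := hΔderiv x hx0 hxS
    have hgint : IntervalIntegrable g volume 0 x := by
      rw [intervalIntegrable_iff_integrableOn_Ioc_of_le hx0.le]
      exact hgIoi.mono_set Ioc_subset_Ioi_self
    have hEcontAt : ContinuousAt E x := by
      have h1 : ContinuousAt Δ x := hd.continuousAt
      exact Real.continuous_exp.continuousAt.comp h1.neg
    have hgcont : ContinuousAt g x := by
      have h1 := hF'cont x hx0 hxS
      have h2 := hDcont x hx0 hxS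
      exact h1.mul (hEcontAt.mul h2)
    have hPd : HasDerivAt (fun u => ∫ m in (0:ℝ)..u, g m) (g x) x :=
      intervalIntegral.integral_hasDerivAt_right hgint
        ⟨Ioi 0, Ioi_mem_nhds hx0, hgmeas⟩ hgcont
    have hexpd : HasDerivAt (fun y => Real.exp (Δ y)) (Real.exp (Δ x) * D x) x := hd.exp
    have hH : HasDerivAt (fun y => Real.exp (Δ y) * (G 0 - ∫ m in (0:ℝ)..y, g m))
        (Real.exp (Δ x) * D x * (G 0 - ∫ m in (0:ℝ)..x, g m) +
          Real.exp (Δ x) * (0 - g x)) x :=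
      hexpd.mul ((hasDerivAt_const x (G 0)).sub hPd)
    have heq : Sg =ᶠ[nhds x] fun y => Real.exp (Δ y) * (G 0 - ∫ m in (0:ℝ)..y, g m) := by
      filter_upwards [Ioi_mem_nhds hx0] with y hy
      rw [hSgeq y, hGsplit y (le_of_lt hy)]
    have hval : Real.exp (Δ x) * D x * (G 0 - ∫ m in (0:ℝ)..x, g m) +
        Real.exp (Δ x) * (0 - g x) = δ x * D x := by
      have h1 : G 0 - (∫ m in (0:ℝ)..x, g m) = G x := (sub_eq_iff_eq_add.2 (by
        have := hGsplit x hx0.le; linarith))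
      rw [h1]
      have h2 : Real.exp (Δ x) * G x = Sg x := (hSgeq x).symm
      have h3 : Real.exp (Δ x) * g x = F' x * D x := by
        simp only [hgdef, hEdef]
        rw [show Real.exp (Δ x) * (F' x * (Real.exp (-Δ x) * D x)) =
          (Real.exp (Δ x) * Real.exp (-Δ x)) * (F' x * D x) by ring,
          ← Real.exp_add]
        simp
      rw [hδ x,
        show Real.exp (Δ x) * D x * G x = D x * (Real.exp (Δ x) * G x) from by ring, h2,
        show Real.exp (Δ x) * (0 - g x) = -(Real.exp (Δ x) * g x) from by ring, h3]
      ring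
    exact (hH.congr_of_eventuallyEq heq).congr_deriv hval
  -- final computation
  intro l hl
  set Dp : ℝ → ℝ := fun m => 1 / (2 * φp m) with hDpdef
  set Dm2 : ℝ → ℝ := fun m => 1 / (2 * |φm m|) with hDm2def
  have hDsum : ∀ m, D m = Dp m + Dm2 m := fun m => rfl
  -- measurability of the pieces
  set φpt : ℝ → ℝ := fun m => φp (max m 0) with hφptdef
  have hφptmono : Monotone φpt := fun a b hab =>
    hφpmono (mem_Ici.2 (le_max_right _ _)) (mem_Ici.2 (le_max_right _ _)) (max_le_max hab le_rfl)
  set φmt : ℝ → ℝ := fun m => φm (max m 0) with hφmtdef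
  have hφmtanti : Antitone φmt := fun a b hab =>
    hφmanti (mem_Ici.2 (le_max_right _ _)) (mem_Ici.2 (le_max_right _ _)) (max_le_max hab le_rfl)
  have hDpmeas : AEStronglyMeasurable Dp (volume.restrict (Ioi (0:ℝ))) := by
    have h1 : Measurable fun m => 1 / (2 * φpt m) :=
      (measurable_const.mul hφptmono.measurable).const_div 1
    refine h1.aestronglyMeasurable.congr ?_
    filter_upwards [ae_restrict_mem measurableSet_Ioi] with m hm
    simp [hφptdef, hDpdef, max_eq_left (le_of_lt (mem_Ioi.1 hm))]
  have hDm2meas : AEStronglyMeasurable Dm2 (volume.restrict (Ioi (0:ℝ))) := by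
    have h1 : Measurable fun m => 1 / (2 * |φmt m|) :=
      (measurable_const.mul hφmtanti.measurable.abs).const_div 1
    refine h1.aestronglyMeasurable.congr ?_
    filter_upwards [ae_restrict_mem measurableSet_Ioi] with m hm
    simp [hφmtdef, hDm2def, max_eq_left (le_of_lt (mem_Ioi.1 hm))]
  have hδmeas : AEStronglyMeasurable δ (volume.restrict (Ioc 0 l)) := by
    have := (((hSgcont l hl).aestronglyMeasurable measurableSet_Icc).mono_set
      Ioc_subset_Icc_self).sub (hF'meas.mono_set Ioc_subset_Ioi_self)
    refine this.congr ?_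
    filter_upwards with m
    simp [hδ m]
  have hδK : ∀ m > (0:ℝ), |δ m| ≤ K := by
    intro m hm
    rw [hδ m, abs_sub_le_iff]
    constructor
    · have := (hFK m hm.le).1; have := hSgle m hm.le; linarith
    · have := (hFK m hm.le).2; have := hSgnn m hm.le; linarith
  have hDple : ∀ m ≥ (0:ℝ), 0 ≤ Dp m ∧ Dp m ≤ D m := by
    intro m hm
    have h1 : 0 < φp m := hφppos m hm
    have h2 : 0 < |φm m| := abs_pos.2 (hφmneg m hm).ne
    constructor
    · positivity
    · rw [hDsum m]
      have : (0:ℝ) ≤ Dm2 m := by positivity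
      linarith
  have hDm2le : ∀ m ≥ (0:ℝ), 0 ≤ Dm2 m ∧ Dm2 m ≤ D m := by
    intro m hm
    have h1 : 0 < φp m := hφppos m hm
    have h2 : 0 < |φm m| := abs_pos.2 (hφmneg m hm).ne
    constructor
    · positivity
    · rw [hDsum m]
      have : (0:ℝ) ≤ Dp m := by positivity
      linarith
  rcases eq_or_lt_of_le hl with h | hlpos
  · rw [← h, hAp 0, hAm 0]
    simp
    ring
  have hIp : IntervalIntegrable (fun m => δ m * Dp m) volume 0 l := by
    rw [intervalIntegrable_iff_integrableOn_Ioc_of_le hl]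
    refine Integrable.mono' ((hΔfin l hlpos).1.const_mul K)
      (hδmeas.mul (hDpmeas.mono_set Ioc_subset_Ioi_self)) ?_
    filter_upwards [ae_restrict_mem measurableSet_Ioc] with m hm
    rw [Real.norm_eq_abs, abs_mul, abs_of_nonneg (hDple m hm.1.le).1]
    calc |δ m| * Dp m ≤ K * Dp m :=
        mul_le_mul_of_nonneg_right (hδK m hm.1) (hDple m hm.1.le).1
      _ ≤ K * D m := mul_le_mul_of_nonneg_left (hDple m hm.1.le).2 hK0
  have hIm : IntervalIntegrable (fun m => δ m * Dm2 m) volume 0 l := by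
    rw [intervalIntegrable_iff_integrableOn_Ioc_of_le hl]
    refine Integrable.mono' ((hΔfin l hlpos).1.const_mul K)
      (hδmeas.mul (hDm2meas.mono_set Ioc_subset_Ioi_self)) ?_
    filter_upwards [ae_restrict_mem measurableSet_Ioc] with m hm
    rw [Real.norm_eq_abs, abs_mul, abs_of_nonneg (hDm2le m hm.1.le).1]
    calc |δ m| * Dm2 m ≤ K * Dm2 m :=
        mul_le_mul_of_nonneg_right (hδK m hm.1) (hDm2le m hm.1.le).1
      _ ≤ K * D m := mul_le_mul_of_nonneg_left (hDm2le m hm.1.le).2 hK0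
  have hI1 : (∫ m in (0:ℝ)..l, δ m / φp m) = 2 * ∫ m in (0:ℝ)..l, δ m * Dp m := by
    rw [← intervalIntegral.integral_const_mul]
    refine intervalIntegral.integral_congr ?_
    intro m _
    simp only [hDpdef, div_eq_mul_inv, mul_inv, one_mul]
    ring
  have hI2 : (∫ m in (0:ℝ)..l, δ m / |φm m|) = 2 * ∫ m in (0:ℝ)..l, δ m * Dm2 m := by
    rw [← intervalIntegral.integral_const_mul]
    refine intervalIntegral.integral_congr ?_
    intro m _
    simp only [hDm2def, div_eq_mul_inv, mul_inv, one_mul]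
    ring
  have hIsum : (∫ m in (0:ℝ)..l, δ m * Dp m) + (∫ m in (0:ℝ)..l, δ m * Dm2 m)
      = ∫ m in (0:ℝ)..l, δ m * D m := by
    rw [← intervalIntegral.integral_add hIp hIm]
    refine intervalIntegral.integral_congr ?_
    intro m _
    show δ m * Dp m + δ m * Dm2 m = δ m * D m
    rw [hDsum m]
    ring
  have hM := hmain l hl
  rw [hAp l, hAm l, hI1, hI2]
  linarith [hIsum, hM]
end
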